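/- arXiv:1110.1876 — 5 statements merged into one kernel-verified Lean document; each statement's English description precedes it below -/
import Mathlib

section
/- Let r ≥ 2 be an integer, let χ be a primitive quadratic Dirichlet character of conductor q > 1 with χ(−1) = (−1)^r, let t = ω(q) be the number of distinct prime divisors of q, and let K > 0 be a real constant. If q has a divisor q' > 1 such that ∏_{p | q'} p^{ord_p(q')·(r − 1/2)}/2 > K·(2π)^r·ζ(r) / (2·Γ(r)·ζ(2r)), then |L(1−r, χ)| / 2^t > K. -/
open scoped Real


lemma myHasProd_re {ι : Type*} {g : ι → ℝ} {L : ℂ}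
    (h : HasProd (fun i ↦ ((g i : ℝ) : ℂ)) L) : HasProd g L.re := by
  have h2 := (Complex.continuous_re.tendsto L).comp h
  have : (Complex.re ∘ fun s : Finset ι ↦ ∏ i ∈ s, ((g i : ℝ) : ℂ))
      = fun s : Finset ι ↦ ∏ i ∈ s, g i := by
    ext s
    simp [Function.comp, ← Complex.ofReal_prod]
  rwa [HasProd, ← this]

lemma myHasProd_abs {ι : Type*} {f : ι → ℂ} {L : ℂ}
    (h : HasProd f L) : HasProd (fun i ↦ ‖f i‖) (‖L‖) := by
  have h2 := (continuous_norm.tendsto L).comp h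
  have : ((fun z : ℂ ↦ ‖z‖) ∘ fun s : Finset ι ↦ ∏ i ∈ s, f i)
      = fun s : Finset ι ↦ ∏ i ∈ s, ‖f i‖ := by
    ext s; simp [Function.comp, norm_prod]
  rwa [HasProd, ← this]

lemma myZetaProd (m : ℕ) (hm : 2 ≤ m) :
    HasProd (fun p : Nat.Primes ↦ ((1 : ℝ) - (p : ℝ) ^ (-(m : ℝ)))⁻¹) ((riemannZeta m).re) := by
  have hs : 1 < ((m : ℂ)).re := by
    simp only [Complex.natCast_re]
    exact_mod_cast hm.trans_lt' one_lt_two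
  have h := riemannZeta_eulerProduct_hasProd hs
  apply myHasProd_re
  convert h using 2 with p
  have hp0 : (0:ℝ) ≤ (p : ℝ) := by positivity
  push_cast
  rw [Complex.ofReal_cpow hp0]
  push_cast
  ring_nf

lemma myTermBounds (m : ℕ) (hm : 2 ≤ m) (p : Nat.Primes) :
    0 < (p : ℝ) ^ (-(m : ℝ)) ∧ (p : ℝ) ^ (-(m : ℝ)) < 1 := by
  have hp : (1:ℝ) < (p : ℝ) := by exact_mod_cast p.prop.one_lt
  constructor
  · exact Real.rpow_pos_of_pos (by linarith) _
  · apply Real.rpow_lt_one_of_one_lt_of_neg hp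
    simp only [neg_neg, Left.neg_neg_iff]
    exact_mod_cast hm.trans_lt' (by norm_num)

lemma myZetaOne_le (m : ℕ) (hm : 2 ≤ m) : 1 ≤ (riemannZeta m).re := by
  refine ge_of_tendsto' (myZetaProd m hm) fun s ↦ ?_
  have := Finset.prod_le_prod (s := s) (f := fun _ ↦ (1:ℝ))
    (g := fun p : Nat.Primes ↦ ((1 : ℝ) - (p : ℝ) ^ (-(m : ℝ)))⁻¹)
    (fun _ _ ↦ zero_le_one) (fun p _ ↦ ?_)
  · simpa using this
  · obtain ⟨h1, h2⟩ := myTermBounds m hm p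
    rw [le_inv_comm₀ one_pos (by linarith)]
    simp only [inv_one]; linarith

lemma myLbound (r : ℕ) (hr : 2 ≤ r) (q : ℕ) [NeZero q] (χ : DirichletCharacter ℂ q) :
    (riemannZeta (2 * r : ℕ)).re ≤ ‖χ.LFunction r‖ * (riemannZeta r).re := by
  have hs : 1 < ((r : ℂ)).re := by
    simp only [Complex.natCast_re]
    exact_mod_cast hr.trans_lt' one_lt_two
  have hL := DirichletCharacter.LSeries_eulerProduct_hasProd χ hs
  rw [← DirichletCharacter.LFunction_eq_LSeries χ hs] at hL
  have hA := myHasProd_abs hL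
  have hZ1 := myZetaProd r hr
  have hZ2 := myZetaProd (2 * r) (by omega)
  have hmul := hA.mul hZ1
  refine le_of_tendsto_of_tendsto' hZ2 hmul fun s ↦ ?_
  refine Finset.prod_le_prod (fun p _ ↦ ?_) (fun p _ ↦ ?_)
  · obtain ⟨h1, h2⟩ := myTermBounds (2 * r) (by omega) p
    exact inv_nonneg.mpr (by push_cast at h2 ⊢; linarith)
  · obtain ⟨hx0, hx1⟩ := myTermBounds r hr p
    set x : ℝ := (p : ℝ) ^ (-(r : ℝ)) with hxdef
    have hp0 : (0:ℝ) < (p : ℝ) := by exact_mod_cast p.prop.pos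
    have hsq : (p : ℝ) ^ (-((2 * r : ℕ) : ℝ)) = x ^ 2 := by
      rw [hxdef, ← Real.rpow_natCast (_ ^ _) 2, ← Real.rpow_mul hp0.le]
      push_cast; ring_nf
    have habs : ‖(p : ℂ) ^ (-(r : ℂ))‖ = x := by
      rw [show ((p : ℕ) : ℂ) = (((p : ℕ) : ℝ) : ℂ) by norm_cast,
        Complex.norm_cpow_eq_rpow_re_of_pos hp0]
      simp [hxdef]
    set c : ℝ := ‖1 - χ (p : ZMod q) * (p : ℂ) ^ (-(r : ℂ))‖ with hcdef
    have hwle : ‖χ (p : ZMod q) * (p : ℂ) ^ (-(r : ℂ))‖ ≤ x := by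
      rw [norm_mul, habs]
      have := χ.norm_le_one (p : ZMod q)
      nlinarith [norm_nonneg (χ (p : ZMod q)), hx0]
    have hcle : c ≤ 1 + x := by
      calc c ≤ ‖(1:ℂ)‖ + ‖χ (p : ZMod q) * (p : ℂ) ^ (-(r : ℂ))‖ := by
              rw [hcdef, sub_eq_add_neg]
              refine (norm_add_le _ _).trans ?_
              simp
        _ ≤ 1 + x := by simp only [norm_one]; linarith
    have hcge : 1 - x ≤ c := by
      have h1 : ‖(1:ℂ)‖ ≤ c + ‖χ (p : ZMod q) * (p : ℂ) ^ (-(r : ℂ))‖ := by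
        calc ‖(1:ℂ)‖ = ‖(1 - χ (p : ZMod q) * (p : ℂ) ^ (-(r : ℂ)))
              + χ (p : ZMod q) * (p : ℂ) ^ (-(r : ℂ))‖ := by ring_nf
          _ ≤ _ := by rw [hcdef]; exact norm_add_le _ _
      simp only [norm_one] at h1
      linarith
    have hc0 : 0 < c := lt_of_lt_of_le (by linarith) hcge
    rw [norm_inv, ← hcdef, hsq, ← mul_inv]
    apply inv_anti₀ (by nlinarith)
    nlinarith

lemma myGaussSq (q : ℕ) [NeZero q] (χ : DirichletCharacter ℂ q) (hprim : χ.IsPrimitive)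
    (hquad : χ.IsQuadratic) :
    gaussSum χ ZMod.stdAddChar ^ 2 = (q : ℂ) * χ (-1) := by
  set g : ℂ := gaussSum χ ZMod.stdAddChar with hg
  have hFT : ZMod.dft ⇑χ = fun k : ZMod q ↦ χ (-k) * g := by
    funext k
    rw [hprim.fourierTransform_eq_inv_mul_gaussSum, hquad.inv]
  have h1 : ZMod.dft (ZMod.dft ⇑χ) 1 = (q : ℂ) * χ (-1) := by
    rw [ZMod.dft_dft]
    simp [smul_eq_mul]
  have h2 : ZMod.dft (ZMod.dft ⇑χ) 1 = g ^ 2 := by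
    rw [hFT, show (fun k : ZMod q ↦ χ (-k) * g) = fun k : ZMod q ↦ (fun j : ZMod q ↦ χ (-j)) k * g
      from rfl, ZMod.dft_mul_const, show (fun j : ZMod q ↦ χ (-j)) = fun j : ZMod q ↦ (⇑χ) (-j)
      from rfl, ZMod.dft_comp_neg]
    rw [hFT]
    simp only [neg_neg, map_one]
    ring
  rw [← h2, h1]

lemma myRootAbs (q : ℕ) [NeZero q] (hq : 1 < q) (χ : DirichletCharacter ℂ q)
    (hprim : χ.IsPrimitive) (hquad : χ.IsQuadratic) {r : ℕ}
    (hparity : χ (-1) = (-1 : ℂ) ^ r) :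
    ‖χ.rootNumber‖ = 1 := by
  have hq0 : (0:ℝ) < (q : ℝ) := by positivity
  have hgabs : ‖gaussSum χ ZMod.stdAddChar‖ = (q : ℝ) ^ ((1:ℝ)/2) := by
    have hg2 := myGaussSq q χ hprim hquad
    have h := congrArg (fun z : ℂ ↦ ‖z‖) hg2
    simp only [norm_pow, norm_mul, hparity] at h
    simp only [norm_neg, norm_one, one_pow, mul_one] at h
    have habsq : ‖((q : ℕ) : ℂ)‖ = (q : ℝ) := by
      rw [Complex.norm_natCast]
    rw [habsq] at h
    rw [← Real.sqrt_eq_rpow, show (q:ℝ) = ‖gaussSum χ ZMod.stdAddChar‖ ^ 2 from h.symm,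
      Real.sqrt_sq (norm_nonneg _)]
  rw [DirichletCharacter.rootNumber, norm_div, norm_div, hgabs, norm_pow, Complex.norm_I,
    one_pow, div_one]
  have hqc : ‖((q : ℕ) ^ ((1:ℂ)/2 : ℂ) : ℂ)‖ = (q : ℝ) ^ ((1:ℝ)/2) := by
    rw [show ((q:ℕ):ℂ) = (((q:ℕ):ℝ):ℂ) by norm_cast, Complex.norm_cpow_eq_rpow_re_of_pos hq0]
    norm_num
  rw [show ((1:ℂ)/2 : ℂ) = (1/2 : ℂ) from rfl] at hqc
  rw [hqc, div_self (by positivity)]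

lemma myGammaC (r : ℕ) (hr : 2 ≤ r) :
    Complex.Gammaℂ (r : ℂ) = ((2 * Real.Gamma r / (2 * π) ^ r : ℝ) : ℂ) := by
  rw [Complex.Gammaℂ_def]
  rw [show (2 * (π:ℂ) : ℂ) = ((2 * π : ℝ) : ℂ) by push_cast; ring]
  rw [show -((r:ℕ):ℂ) = ((-(r:ℝ) : ℝ) : ℂ) by push_cast; ring]
  rw [← Complex.ofReal_cpow (by positivity)]
  rw [show ((r:ℕ):ℂ) = (((r:ℕ):ℝ):ℂ) by norm_cast, Complex.Gamma_ofReal]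
  rw [Real.rpow_neg (by positivity), Real.rpow_natCast]
  push_cast
  ring

open DirichletCharacter in
lemma myFE (r : ℕ) (hr : 2 ≤ r) (q : ℕ) [NeZero q] (hq : 1 < q)
    (χ : DirichletCharacter ℂ q) (hprim : χ.IsPrimitive) (hquad : χ.IsQuadratic)
    (hparity : χ (-1) = (-1 : ℂ) ^ r) :
    ‖χ.LFunction (1 - r)‖ =
      (q : ℝ) ^ ((r : ℝ) - 1/2) * (2 * Real.Gamma r / (2 * π) ^ r) *
        ‖χ.LFunction r‖ := by
  have hq1 : q ≠ 1 := hq.ne'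
  have hrs : ∀ n : ℕ, (r : ℂ) ≠ -n := by
    intro n h
    have h2 := congrArg Complex.re h
    simp only [Complex.natCast_re, Complex.neg_re] at h2
    have h3 : (2:ℝ) ≤ (r:ℝ) := by exact_mod_cast hr
    have h4 : (0:ℝ) ≤ (n:ℝ) := Nat.cast_nonneg n
    linarith
  have hΓr : Complex.Gammaℝ (r : ℂ) ≠ 0 := by
    apply Complex.Gammaℝ_ne_zero_of_re_pos
    simp only [Complex.natCast_re]
    have : (2:ℝ) ≤ (r:ℝ) := by exact_mod_cast hr
    linarith
  have hΓr1 : Complex.Gammaℝ ((r : ℂ) + 1) ≠ 0 := by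
    apply Complex.Gammaℝ_ne_zero_of_re_pos
    simp only [Complex.add_re, Complex.natCast_re, Complex.one_re]
    have : (2:ℝ) ≤ (r:ℝ) := by exact_mod_cast hr
    linarith
  have hfe := hprim.completedLFunction_one_sub (r : ℂ)
  rw [hquad.inv] at hfe
  have hL1 := LFunction_eq_completed_div_gammaFactor χ (1 - r) (Or.inr hq1)
  have hLr := LFunction_eq_completed_div_gammaFactor χ (r : ℂ) (Or.inr hq1)
  -- common abs computations
  have hqabs : ‖((q:ℕ):ℂ) ^ ((r:ℂ) - 1/2)‖ = (q : ℝ) ^ ((r:ℝ) - 1/2) := by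
    rw [show ((q:ℕ):ℂ) = (((q:ℕ):ℝ):ℂ) by norm_cast,
      Complex.norm_cpow_eq_rpow_re_of_pos (by positivity)]
    norm_num
  have hroot := myRootAbs q hq χ hprim hquad hparity
  rcases Nat.even_or_odd r with hre | hro
  · -- even case
    obtain ⟨m, hm⟩ := hre
    have hχeven : χ.Even := by
      rw [DirichletCharacter.Even, hparity]
      exact (Even.neg_one_pow ⟨m, hm⟩)
    have hΛr : completedLFunction χ (r : ℂ) = χ.LFunction r * Complex.Gammaℝ (r : ℂ) := by
      rw [hLr, hχeven.gammaFactor_def, div_mul_cancel₀ _ hΓr]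
    have key : χ.LFunction (1 - r) = ((q:ℕ):ℂ) ^ ((r:ℂ) - 1/2) * χ.rootNumber *
        χ.LFunction r * (Complex.Gammaℂ (r:ℂ) * Complex.cos (π * r / 2)) := by
      rw [hL1, hχeven.gammaFactor_def, div_eq_mul_inv, Complex.inv_Gammaℝ_one_sub hrs, hfe, hΛr]
      field_simp
    rw [key, norm_mul, norm_mul, norm_mul, hqabs, hroot, mul_one, norm_mul]
    have hGC : ‖Complex.Gammaℂ (r:ℂ)‖ = 2 * Real.Gamma r / (2 * π) ^ r := by
      rw [myGammaC r hr, Complex.norm_real, Real.norm_eq_abs, abs_of_pos]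
      have := Real.Gamma_pos_of_pos (show (0:ℝ) < r by positivity)
      positivity
    have hcos : ‖Complex.cos (π * r / 2)‖ = 1 := by
      rw [show ((π:ℂ) * r / 2) = ((π * r / 2 : ℝ) : ℂ) by push_cast; ring,
        ← Complex.ofReal_cos, Complex.norm_real, Real.norm_eq_abs,
        show (π * r / 2 : ℝ) = ((m:ℤ):ℝ) * π by rw [hm]; push_cast; ring,
        Real.abs_cos_int_mul_pi]
    rw [hGC, hcos, mul_one]
    ring
  · -- odd case
    obtain ⟨m, hm⟩ := hro
    have hχodd : χ.Odd := by
      rw [DirichletCharacter.Odd, hparity]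
      exact (Odd.neg_one_pow ⟨m, hm⟩)
    have hΛr : completedLFunction χ (r : ℂ) = χ.LFunction r * Complex.Gammaℝ ((r : ℂ) + 1) := by
      rw [hLr, hχodd.gammaFactor_def, div_mul_cancel₀ _ hΓr1]
    have h2sub : (1 : ℂ) - r + 1 = 2 - r := by ring
    have key : χ.LFunction (1 - r) = ((q:ℕ):ℂ) ^ ((r:ℂ) - 1/2) * χ.rootNumber *
        χ.LFunction r * (Complex.Gammaℂ (r:ℂ) * Complex.sin (π * r / 2)) := by
      rw [hL1, hχodd.gammaFactor_def, h2sub, div_eq_mul_inv, Complex.inv_Gammaℝ_two_sub hrs,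
        hfe, hΛr]
      field_simp
    rw [key, norm_mul, norm_mul, norm_mul, hqabs, hroot, mul_one, norm_mul]
    have hGC : ‖Complex.Gammaℂ (r:ℂ)‖ = 2 * Real.Gamma r / (2 * π) ^ r := by
      rw [myGammaC r hr, Complex.norm_real, Real.norm_eq_abs, abs_of_pos]
      have := Real.Gamma_pos_of_pos (show (0:ℝ) < r by positivity)
      positivity
    have hsin : ‖Complex.sin (π * r / 2)‖ = 1 := by
      rw [show ((π:ℂ) * r / 2) = ((π * r / 2 : ℝ) : ℂ) by push_cast; ring,
        ← Complex.ofReal_sin, Complex.norm_real, Real.norm_eq_abs,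
        show (π * r / 2 : ℝ) = ((m:ℤ):ℝ) * π + π/2 by rw [hm]; push_cast; ring,
        Real.sin_add_pi_div_two, Real.abs_cos_int_mul_pi]
    rw [hGC, hsin, mul_one]
    ring

lemma myNatRpow (n : ℕ) (hn : n ≠ 0) (x : ℝ) :
    (n : ℝ) ^ x = ∏ p ∈ n.primeFactors, (p : ℝ) ^ ((n.factorization p : ℝ) * x) := by
  have h0 := Nat.factorization_prod_pow_eq_self hn
  rw [Finsupp.prod, Nat.support_factorization] at h0
  have h : ((n : ℝ)) = ∏ p ∈ n.primeFactors, (p : ℝ) ^ (n.factorization p : ℕ) := by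
    rw [← h0]; push_cast; rw [h0]
  rw [h, ← Real.finset_prod_rpow _ _ (fun p _ ↦ by positivity) x]
  refine Finset.prod_congr rfl fun p hp ↦ ?_
  rw [← Real.rpow_natCast (p:ℝ) (n.factorization p), ← Real.rpow_mul (by positivity)]

/-- **Lemma (bounding quadratic twists, divisor form).**
Let `r ≥ 2` be an integer, `χ` a primitive quadratic Dirichlet character of conductor `q > 1`
with `χ(-1) = (-1)^r`, `t = ω(q)` the number of distinct prime divisors of `q`, and `K > 0`.
If `q` has a divisor `q' > 1` with `∏_{p ∣ q'} p^(ord_p(q')·(r - 1/2)) / 2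
  > K·(2π)^r·ζ(r) / (2·Γ(r)·ζ(2r))`, then `|L(1-r, χ)| / 2^t > K`. -/
theorem bounding_twists_divisor (r : ℕ) (hr : 2 ≤ r) (q : ℕ) [NeZero q] (hq : 1 < q)
    (χ : DirichletCharacter ℂ q) (hprim : χ.IsPrimitive) (hquad : χ.IsQuadratic)
    (hparity : χ (-1) = (-1 : ℂ) ^ r) (K : ℝ) (hK : 0 < K)
    (hdiv : ∃ q' : ℕ, 1 < q' ∧ q' ∣ q ∧
      ∏ p ∈ q'.primeFactors, (p : ℝ) ^ ((q'.factorization p : ℝ) * ((r : ℝ) - 1/2)) / 2 >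
        K * (2 * π) ^ r * (riemannZeta r).re / (2 * Real.Gamma r * (riemannZeta (2 * r)).re)) :
    ‖χ.LFunction (1 - r)‖ / 2 ^ q.primeFactors.card > K := by
  obtain ⟨q', hq'1, hq'dvd, hgt⟩ := hdiv
  have hq0 : q ≠ 0 := NeZero.ne q
  have hq'0 : q' ≠ 0 := by omega
  set x : ℝ := (r : ℝ) - 1/2 with hxdef
  clear_value x
  have hx32 : (3:ℝ)/2 ≤ x := by
    have : (2:ℝ) ≤ (r:ℝ) := by exact_mod_cast hr
    rw [hxdef]; linarith
  have hx0 : (0:ℝ) ≤ x := by linarith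
  -- zeta facts
  have hZr : 1 ≤ (riemannZeta r).re := myZetaOne_le r hr
  have hZ2cast : ((2 * r : ℕ) : ℂ) = 2 * (r : ℂ) := by push_cast; ring
  have hZ2 : 1 ≤ (riemannZeta (2 * (r:ℂ))).re := by
    rw [← hZ2cast]; exact myZetaOne_le (2 * r) (by omega)
  set Zr : ℝ := (riemannZeta r).re with hZrdef
  set Z2 : ℝ := (riemannZeta (2 * (r:ℂ))).re with hZ2def
  clear_value Zr Z2
  have hZr0 : 0 < Zr := by linarith
  have hZ20 : 0 < Z2 := by linarith
  -- Gamma and D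
  have hΓ : 0 < Real.Gamma r := Real.Gamma_pos_of_pos (by positivity)
  set D : ℝ := 2 * Real.Gamma r / (2 * π) ^ r with hDdef
  clear_value D
  have hD0 : 0 < D := by
    have := Real.pi_pos
    rw [hDdef]
    positivity
  set A : ℝ := ‖χ.LFunction r‖ with hAdef
  clear_value A
  set M : ℝ := Z2 / Zr with hMdef
  clear_value M
  have hM0 : 0 < M := by rw [hMdef]; positivity
  have hMA : M ≤ A := by
    have h := myLbound r hr q χ
    rw [hZ2cast] at h
    rw [hMdef, div_le_iff₀ hZr0, hZ2def, hZrdef, hAdef]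
    exact h
  -- product identities
  set t := q.primeFactors.card with htdef
  clear_value t
  set f : ℕ → ℝ := fun p ↦ (p : ℝ) ^ ((q.factorization p : ℝ) * x) / 2 with hfdef
  set P : ℝ := ∏ p ∈ q.primeFactors, f p with hPdef
  clear_value P
  have hPeq : (q:ℝ) ^ x / 2 ^ t = P := by
    rw [hPdef, hfdef, Finset.prod_div_distrib, Finset.prod_const, myNatRpow q hq0 x, htdef]
  set P' : ℝ := ∏ p ∈ q'.primeFactors, (p : ℝ) ^ ((q'.factorization p : ℝ) * x) / 2 with hP'def
  clear_value P'
  have hsub : q'.primeFactors ⊆ q.primeFactors := Nat.primeFactors_mono hq'dvd hq0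
  have hfact : q'.factorization ≤ q.factorization :=
    (Nat.factorization_le_iff_dvd hq'0 hq0).mpr hq'dvd
  have hstep1 : P' ≤ ∏ p ∈ q'.primeFactors, f p := by
    rw [hP'def]
    refine Finset.prod_le_prod
      (fun p _ ↦ div_nonneg (Real.rpow_nonneg (by positivity) _) two_pos.le) (fun p hp ↦ ?_)
    have hp2 : (1:ℝ) ≤ (p:ℝ) := by
      have h2 := (Nat.prime_of_mem_primeFactors hp).two_le
      have : (2:ℝ) ≤ (p:ℝ) := by exact_mod_cast h2
      linarith
    have he : (q'.factorization p : ℝ) * x ≤ (q.factorization p : ℝ) * x := by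
      have h1 := hfact p
      have h2 : (q'.factorization p : ℝ) ≤ (q.factorization p : ℝ) := by exact_mod_cast h1
      nlinarith
    have := Real.rpow_le_rpow_of_exponent_le hp2 he
    simp only [hfdef]
    linarith
  have hone_le : ∀ p ∈ q.primeFactors, 1 ≤ f p := by
    intro p hp
    have hprime := Nat.prime_of_mem_primeFactors hp
    have hp2 : (2:ℝ) ≤ (p:ℝ) := by exact_mod_cast hprime.two_le
    have he1 : 1 ≤ (q.factorization p : ℝ) * x := by
      have h1 : 1 ≤ q.factorization p := (Nat.Prime.factorization_pos_of_dvd hprime hq0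
        (Nat.dvd_of_mem_primeFactors hp))
      have h2 : (1:ℝ) ≤ (q.factorization p : ℝ) := by exact_mod_cast h1
      have h3 := mul_le_mul_of_nonneg_right h2 hx0
      rw [one_mul] at h3
      linarith
    have : (p:ℝ) ^ (1:ℝ) ≤ (p:ℝ) ^ ((q.factorization p : ℝ) * x) :=
      Real.rpow_le_rpow_of_exponent_le (by linarith) he1
    rw [Real.rpow_one] at this
    simp only [hfdef]
    linarith
  have hstep2 : ∏ p ∈ q'.primeFactors, f p ≤ P := by
    rw [hPdef, ← Finset.prod_sdiff hsub]
    have hpos : 0 ≤ ∏ p ∈ q'.primeFactors, f p :=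
      Finset.prod_nonneg fun p hp ↦ by
        have := hone_le p (hsub hp); linarith
    have hd1 : 1 ≤ ∏ p ∈ q.primeFactors \ q'.primeFactors, f p := by
      have := Finset.prod_le_prod (s := q.primeFactors \ q'.primeFactors)
        (f := fun _ ↦ (1:ℝ)) (g := f) (fun _ _ ↦ zero_le_one)
        (fun p hp ↦ hone_le p (Finset.mem_sdiff.mp hp).1)
      simpa using this
    nlinarith
  have hP'pos : 0 < P' := by
    have hE0 : 0 < K * (2 * π) ^ r * Zr / (2 * Real.Gamma r * Z2) := by
      have := Real.pi_pos
      positivity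
    calc (0:ℝ) < K * (2 * π) ^ r * Zr / (2 * Real.Gamma r * Z2) := hE0
      _ < P' := hgt
  have hPP' : P' ≤ P := hstep1.trans hstep2
  have hP0 : 0 < P := lt_of_lt_of_le hP'pos hPP'
  -- final chain
  have hE : P > K * (2 * π) ^ r * Zr / (2 * Real.Gamma r * Z2) :=
    lt_of_lt_of_le hgt hPP'
  have hDME : D * M * (K * (2 * π) ^ r * Zr / (2 * Real.Gamma r * Z2)) = K := by
    have hpi := Real.pi_pos
    rw [hDdef, hMdef]
    field_simp
  have hgoal : ‖χ.LFunction (1 - r)‖ / 2 ^ t = D * A * P := by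
    rw [myFE r hr q hq χ hprim hquad hparity, ← hxdef, hDdef, hAdef, ← hPeq]
    ring
  rw [hgoal]
  calc K = D * M * (K * (2 * π) ^ r * Zr / (2 * Real.Gamma r * Z2)) := hDME.symm
    _ < D * M * P := by
        apply mul_lt_mul_of_pos_left hE
        positivity
    _ ≤ D * A * P := by
        apply mul_le_mul_of_nonneg_right _ hP0.le
        exact mul_le_mul_of_nonneg_left hMA hD0.le
end

section
/- Let r ≥ 2 be an integer, let χ be a primitive quadratic Dirichlet character of conductor q > 1 with χ(−1) = (−1)^r, let t = ω(q) be the number of distinct prime divisors of q, and let K > 0 be a real constant. If q is divisible by a prime power p^ν > 1 with p^ν > (K·(2π)^r·ζ(r) / (Γ(r)·ζ(2r)))^{2/(2r−1)}, then |L(1−r, χ)| / 2^t > K. -/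
open scoped Real

open Complex ZMod
open Complex

noncomputable def cAbsHom : ℂ →* ℝ where
  toFun := fun z ↦ ‖z‖
  map_one' := norm_one
  map_mul' := norm_mul

/-- Real value of zeta at naturals ≥ 2. -/
noncomputable def zr (k : ℕ) : ℝ := ∑' n : ℕ, 1 / (n : ℝ) ^ k

lemma zr_summable {k : ℕ} (hk : 1 < k) : Summable (fun n : ℕ ↦ 1 / (n : ℝ) ^ k) := by
  simpa [one_div] using Real.summable_nat_pow_inv.mpr hk

lemma zr_pos {k : ℕ} (hk : 1 < k) : 0 < zr k := by
  refine Summable.tsum_pos (zr_summable hk) (fun n ↦ by positivity) 1 (by norm_num)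

lemma riemannZeta_nat (k : ℕ) (hk : 1 < k) : riemannZeta k = (zr k : ℂ) := by
  rw [zeta_nat_eq_tsum_of_gt_one hk, zr, Complex.ofReal_tsum]
  push_cast
  rfl

lemma hasProd_le_of_le {ι : Type*} {f g : ι → ℝ} {a b : ℝ} (h0 : ∀ i, 0 ≤ f i)
    (h : ∀ i, f i ≤ g i) (hf : HasProd f a) (hg : HasProd g b) : a ≤ b :=
  le_of_tendsto_of_tendsto' hf hg fun F ↦
    Finset.prod_le_prod (fun i _ ↦ h0 i) (fun i _ ↦ h i)

lemma abs_hasProd {ι : Type*} {f : ι → ℂ} {a : ℂ} (hf : HasProd f a) :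
    HasProd (fun i ↦ ‖f i‖) (‖a‖) :=
  hf.map cAbsHom continuous_norm

open scoped LSeries.notation in
lemma abs_LSeries_ge (r : ℕ) (hr : 2 ≤ r) {q : ℕ} (χ : DirichletCharacter ℂ q)
    (hquad : χ.IsQuadratic) :
    zr (2 * r) ≤ zr r * ‖L ↗χ r‖ := by
  have hre : (1 : ℝ) < ((r : ℕ) : ℂ).re := by
    simp only [natCast_re]; exact_mod_cast by omega
  have hre2 : (1 : ℝ) < ((2 * r : ℕ) : ℂ).re := by
    simp only [natCast_re]; exact_mod_cast by omega
  have h2 := abs_hasProd (riemannZeta_eulerProduct_hasProd hre2)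
  have h1 := abs_hasProd (riemannZeta_eulerProduct_hasProd hre)
  have hL := abs_hasProd (DirichletCharacter.LSeries_eulerProduct_hasProd χ hre)
  have hmul := h1.mul hL
  have key : ∀ p : Nat.Primes,
      ‖(1 - (p : ℂ) ^ (-((2 * r : ℕ) : ℂ)))⁻¹‖ ≤
        ‖(1 - (p : ℂ) ^ (-((r : ℕ) : ℂ)))⁻¹‖ *
          ‖(1 - χ p * (p : ℂ) ^ (-((r : ℕ) : ℂ)))⁻¹‖ := by
    intro p
    set x : ℝ := ((p : ℝ) ^ r)⁻¹ with hx
    have hp1 : (1 : ℝ) < (p : ℝ) := by exact_mod_cast p.2.one_lt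
    have hx0 : 0 < x := by positivity
    have hx1 : x < 1 := by
      rw [hx, inv_lt_one_iff₀]
      right
      exact one_lt_pow₀ hp1 (by omega)
    have e1 : (p : ℂ) ^ (-((r : ℕ) : ℂ)) = ((x : ℝ) : ℂ) := by
      rw [Complex.cpow_neg, Complex.cpow_natCast, hx]
      push_cast
      ring
    have e2 : (p : ℂ) ^ (-((2 * r : ℕ) : ℂ)) = ((x ^ 2 : ℝ) : ℂ) := by
      rw [Complex.cpow_neg, Complex.cpow_natCast, hx]
      push_cast
      ring
    rw [e1, e2]
    have habs : ∀ y : ℝ, ‖(1 - (y:ℂ))⁻¹‖ = |1 - y|⁻¹ := fun y ↦ by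
      rw [norm_inv, ← Complex.ofReal_one, ← Complex.ofReal_sub, Complex.norm_real, Real.norm_eq_abs]
    rcases hquad p with h | h | h
    · rw [h, zero_mul, sub_zero, habs, habs, inv_one, norm_one, mul_one]
      rw [abs_of_pos (by nlinarith), abs_of_pos (by nlinarith)]
      rw [inv_le_inv₀ (by nlinarith) (by nlinarith)]
      nlinarith
    · rw [h, one_mul, habs, habs]
      rw [abs_of_pos (by nlinarith), abs_of_pos (by nlinarith), ← mul_inv,
        inv_le_inv₀ (by nlinarith) (by nlinarith)]
      nlinarith
    · rw [h, neg_one_mul, sub_neg_eq_add, habs, habs,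
        show ‖(1 + (x:ℂ))⁻¹‖ = |1 + x|⁻¹ by
          rw [norm_inv, ← Complex.ofReal_one, ← Complex.ofReal_add, Complex.norm_real, Real.norm_eq_abs]]
      rw [abs_of_pos (by nlinarith), abs_of_pos (by nlinarith), abs_of_pos (by nlinarith),
        ← mul_inv, inv_le_inv₀ (by nlinarith) (by nlinarith)]
      nlinarith
  have hle := hasProd_le_of_le (fun p ↦ norm_nonneg _) key h2 hmul
  rw [riemannZeta_nat r (by omega), riemannZeta_nat (2 * r) (by omega),
    Complex.norm_real, Complex.norm_real, Real.norm_eq_abs, Real.norm_eq_abs, abs_of_pos (zr_pos (by omega)),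
    abs_of_pos (zr_pos (by omega))] at hle
  exact hle

lemma LFunction_const_mul {N : ℕ} [NeZero N] (c : ℂ) (Φ : ZMod N → ℂ) (s : ℂ) :
    ZMod.LFunction (fun k ↦ c * Φ k) s = c * ZMod.LFunction Φ s := by
  simp only [ZMod.LFunction, Finset.mul_sum]
  congr 1 with j
  ring

lemma gauss_sq {q : ℕ} [NeZero q] (χ : DirichletCharacter ℂ q)
    (hprim : χ.IsPrimitive) (hquad : χ.IsQuadratic) (hsq1 : χ (-1) * χ (-1) = 1) :
    gaussSum χ ZMod.stdAddChar ^ 2 = χ (-1) * q := by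
  set τ := gaussSum χ ZMod.stdAddChar with hτ
  have h𝓕 : 𝓕 ⇑χ = fun k ↦ (χ (-1) * τ) * χ k := by
    funext k
    rw [hprim.fourierTransform_eq_inv_mul_gaussSum, hquad.inv,
      show (-k : ZMod q) = (-1) * k by ring, map_mul]
    ring
  have h2 : 𝓕 (𝓕 ⇑χ) 1 = (χ (-1) * τ) * 𝓕 ⇑χ 1 := by
    conv_lhs => rw [h𝓕, ZMod.dft_const_mul]
  rw [ZMod.dft_dft] at h2
  simp only [h𝓕] at h2
  rw [map_one, smul_eq_mul] at h2
  rcases hquad (-1) with h | h | h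
  · rw [h] at hsq1; simp at hsq1
  · rw [h] at h2 ⊢
    linear_combination h2.symm
  · rw [h] at h2 ⊢
    linear_combination -h2

lemma abs_LFunction_one_sub (r : ℕ) (hr : 2 ≤ r) {q : ℕ} [NeZero q] (hq : 1 < q)
    (χ : DirichletCharacter ℂ q) (hprim : χ.IsPrimitive) (hquad : χ.IsQuadratic)
    (hparity : χ (-1) = (-1 : ℂ) ^ r) :
    ‖χ.LFunction (1 - r)‖ =
      2 * Real.Gamma r * ((2 * π) ^ r)⁻¹ * Real.sqrt q * (q : ℝ) ^ ((r : ℝ) - 1) *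
        ‖χ.LFunction r‖ := by
  have hsq1 : χ (-1) * χ (-1) = 1 := by
    rw [hparity, ← pow_add]
    exact Even.neg_one_pow ⟨r, rfl⟩
  set τ := gaussSum χ ZMod.stdAddChar with hτdef
  set Lr := ZMod.LFunction ⇑χ (r : ℂ) with hLr
  have hs : ∀ n : ℕ, (r : ℂ) ≠ -n := by
    intro n h
    have : (r : ℤ) = -(n : ℤ) := by exact_mod_cast h
    omega
  have hs' : ((r : ℕ) : ℂ) ≠ 1 := by
    have : ((r : ℕ) : ℂ) ≠ ((1 : ℕ) : ℂ) := by
      exact_mod_cast (by omega : r ≠ 1)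
    simpa using this
  have h𝓕 : 𝓕 ⇑χ = fun k ↦ (χ (-1) * τ) * χ k := by
    funext k
    rw [hprim.fourierTransform_eq_inv_mul_gaussSum, hquad.inv,
      show (-k : ZMod q) = (-1) * k by ring, map_mul]
    ring
  have FE := ZMod.LFunction_one_sub ⇑χ hs (Or.inr hs')
  have hA : ZMod.LFunction (𝓕 ⇑χ) (r : ℂ) = (χ (-1) * τ) * Lr := by
    rw [h𝓕, LFunction_const_mul, hLr]
  have hB : ZMod.LFunction (𝓕 fun x ↦ χ (-x)) (r : ℂ) = τ * Lr := by
    have hneg : (fun x : ZMod q ↦ χ (-x)) = fun x ↦ χ (-1) * χ x := by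
      funext x
      rw [show (-x : ZMod q) = (-1) * x by ring, map_mul]
    rw [hneg, ZMod.dft_const_mul, show (fun k ↦ χ (-1) * 𝓕 ⇑χ k) = fun k ↦ χ (-1) * ((χ (-1) * τ) * χ k) by simp only [h𝓕]]
    have : (fun k : ZMod q ↦ χ (-1) * (χ (-1) * τ * χ k)) = fun k ↦ τ * χ k := by
      funext k
      rw [← mul_assoc, ← mul_assoc, hsq1, one_mul]
    rw [this, LFunction_const_mul, hLr]
  rw [hA, hB] at FE
  -- simplify the exponential bracket
  have hm1 : ((-1 : ℂ)) ^ r = Complex.exp ((r : ℂ) * (π * I)) := by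
    rw [← Complex.exp_pi_mul_I]
    exact (Complex.exp_nat_mul _ r).symm
  have hE : Complex.exp (π * I * r / 2) * χ (-1) = Complex.exp (-(π * I * r) / 2) := by
    rw [hparity, hm1, ← Complex.exp_add,
      show π * I * r / 2 + (r : ℂ) * (π * I) = -(π * I * r) / 2 + ((r : ℤ) : ℂ) * (2 * π * I) by
        push_cast; ring,
      Complex.exp_add, Complex.exp_int_mul_two_pi_mul_I, mul_one]
  have hbr : Complex.exp (π * I * r / 2) * (χ (-1) * τ * Lr)
      + Complex.exp (-π * I * r / 2) * (τ * Lr)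
      = 2 * Complex.exp (-(π * I * r) / 2) * (τ * Lr) := by
    rw [show Complex.exp (-π * I * r / 2) = Complex.exp (-(π * I * r) / 2) by ring_nf,
      ← hE]
    ring
  rw [hbr] at FE
  have hLfun : χ.LFunction (1 - (r : ℂ)) = (q : ℂ) ^ ((r : ℂ) - 1) * (2 * (π : ℂ)) ^ (-(r : ℂ))
      * Complex.Gamma r * (2 * Complex.exp (-(π * I * r) / 2) * (τ * Lr)) := FE
  rw [hLfun]
  -- take absolute values
  have hq0 : (0 : ℝ) < q := by positivity
  have a1 : ‖(q : ℂ) ^ ((r : ℂ) - 1)‖ = (q : ℝ) ^ ((r : ℝ) - 1) := by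
    rw [show ((q : ℕ) : ℂ) = ((q : ℝ) : ℂ) by push_cast; rfl,
      Complex.norm_cpow_eq_rpow_re_of_pos hq0]
    norm_num
  have a2 : ‖(2 * (π : ℂ)) ^ (-(r : ℂ))‖ = ((2 * π) ^ r)⁻¹ := by
    rw [show (2 * (π : ℂ)) = (((2 * π : ℝ)) : ℂ) by push_cast; rfl,
      Complex.norm_cpow_eq_rpow_re_of_pos (by positivity)]
    rw [show (-(r : ℂ)).re = -(r : ℝ) by simp, Real.rpow_neg (by positivity),
      Real.rpow_natCast]
  have a3 : ‖Complex.Gamma (r : ℂ)‖ = Real.Gamma r := by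
    rw [show ((r : ℕ) : ℂ) = (((r : ℝ)) : ℂ) by push_cast; rfl, Complex.Gamma_ofReal,
      Complex.norm_real, Real.norm_eq_abs, abs_of_pos (Real.Gamma_pos_of_pos (by positivity))]
  have a4 : ‖Complex.exp (-(π * I * r) / 2)‖ = 1 := by
    rw [Complex.norm_exp]
    norm_num [Complex.div_re]
  have a5 : ‖τ‖ = Real.sqrt q := by
    have hτ2 : τ ^ 2 = χ (-1) * q := gauss_sq χ hprim hquad hsq1
    have habs2 : (‖τ‖) ^ 2 = q := by
      rw [← norm_pow, hτ2, norm_mul, hparity]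
      simp
    rw [← habs2, Real.sqrt_sq (norm_nonneg _)]
  have a6 : ‖Lr‖ = ‖χ.LFunction (r : ℂ)‖ := rfl
  rw [norm_mul, norm_mul, norm_mul, norm_mul, norm_mul, norm_mul, a1, a2, a3, a4, a5, a6, Complex.norm_two]
  ring

lemma q_ge {p ν q : ℕ} (hp : p.Prime) (hν1 : 1 < p ^ ν) (hdvd : p ^ ν ∣ q) (hq0 : q ≠ 0) :
    p ^ ν * 2 ^ (q.primeFactors.card - 1) ≤ q := by
  have hν : ν ≠ 0 := by rintro rfl; simp at hν1
  have hpq : p ∣ q := (dvd_pow_self p hν).trans hdvd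
  have hp_mem : p ∈ q.primeFactors := Nat.mem_primeFactors.mpr ⟨hp, hpq, hq0⟩
  set S := q.primeFactors.erase p with hS
  have hcard : S.card = q.primeFactors.card - 1 := Finset.card_erase_of_mem hp_mem
  set m := ∏ l ∈ S, l with hm
  have hmdvd : m ∣ q := by
    refine dvd_trans ?_ (Nat.prod_primeFactors_dvd q)
    exact Finset.prod_dvd_prod_of_subset _ _ _ (Finset.erase_subset _ _)
  have hcop : Nat.Coprime (p ^ ν) m := by
    apply Nat.Coprime.pow_left
    apply Nat.Coprime.prod_right
    intro l hl
    have hlp : l.Prime := Nat.prime_of_mem_primeFactors (Finset.mem_of_mem_erase hl)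
    exact (Nat.coprime_primes hp hlp).mpr (Finset.ne_of_mem_erase hl).symm
  have hmul : p ^ ν * m ∣ q := hcop.mul_dvd_of_dvd_of_dvd hdvd hmdvd
  have h2m : 2 ^ (q.primeFactors.card - 1) ≤ m := by
    rw [← hcard, hm, ← Finset.prod_const]
    exact Finset.prod_le_prod' fun l hl ↦
      (Nat.prime_of_mem_primeFactors (Finset.mem_of_mem_erase hl)).two_le
  calc p ^ ν * 2 ^ (q.primeFactors.card - 1) ≤ p ^ ν * m := by
        exact Nat.mul_le_mul_left _ h2m
    _ ≤ q := Nat.le_of_dvd (Nat.pos_of_ne_zero hq0) hmul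


/-- **Lemma (bounding quadratic twists, prime-power form).**
Let `r ≥ 2` be an integer, `χ` a primitive quadratic Dirichlet character of conductor `q > 1`
with `χ(-1) = (-1)^r`, `t = ω(q)`, and `K > 0`.  If `q` is divisible by a prime power
`p^ν > 1` with `p^ν > (K·(2π)^r·ζ(r) / (Γ(r)·ζ(2r)))^(2/(2r-1))`, then
`|L(1-r, χ)| / 2^t > K`. -/
theorem bounding_twists_prime_power (r : ℕ) (hr : 2 ≤ r) (q : ℕ) [NeZero q] (hq : 1 < q)
    (χ : DirichletCharacter ℂ q) (hprim : χ.IsPrimitive) (hquad : χ.IsQuadratic)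
    (hparity : χ (-1) = (-1 : ℂ) ^ r) (K : ℝ) (hK : 0 < K)
    (hdiv : ∃ p ν : ℕ, p.Prime ∧ 1 < p ^ ν ∧ p ^ ν ∣ q ∧
      ((p : ℝ) ^ ν >
        (K * (2 * π) ^ r * (riemannZeta r).re / (Real.Gamma r * (riemannZeta (2 * r)).re)) ^
          ((2 : ℝ) / (2 * (r : ℝ) - 1)))) :
    ‖χ.LFunction (1 - r)‖ / 2 ^ q.primeFactors.card > K := by
  obtain ⟨p, ν, hp, hpν1, hpνq, hbig⟩ := hdiv
  set t := q.primeFactors.card with ht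
  have hq0 : q ≠ 0 := by omega
  have ht1 : 1 ≤ t := by
    rw [ht]
    exact Finset.card_pos.mpr (Nat.nonempty_primeFactors.mpr hq)
  have hzr : (riemannZeta (r : ℂ)).re = zr r := by
    rw [riemannZeta_nat r (by omega)]; simp
  have hz2r : (riemannZeta (2 * (r : ℂ))).re = zr (2 * r) := by
    rw [show 2 * (r : ℂ) = ((2 * r : ℕ) : ℂ) by push_cast; ring,
      riemannZeta_nat (2 * r) (by omega)]
    simp
  set G : ℝ := Real.Gamma r with hGdef
  have hG : 0 < G := Real.Gamma_pos_of_pos (by positivity)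
  have hz1 : 0 < zr r := zr_pos (by omega)
  have hz2 : 0 < zr (2 * r) := zr_pos (by omega)
  have hP : (0:ℝ) < (2 * π) ^ r := by positivity
  set C : ℝ := K * (2 * π) ^ r * zr r / (G * zr (2 * r)) with hCdef
  have hC : 0 < C := div_pos (mul_pos (mul_pos hK hP) hz1) (mul_pos hG hz2)
  rw [hzr, hz2r] at hbig
  set e : ℝ := (r : ℝ) - 1 / 2 with hedef
  have hr2 : (2:ℝ) ≤ (r:ℝ) := by exact_mod_cast hr
  have he1 : 1 ≤ e := by rw [hedef]; linarith
  have he0 : 0 < e := by linarith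
  -- (p^ν)^e > C
  have hpe : C < ((p : ℝ) ^ ν) ^ e := by
    have h1 : (C ^ ((2:ℝ) / (2 * (r:ℝ) - 1))) ^ e = C := by
      rw [← Real.rpow_mul hC.le,
        show (2:ℝ) / (2 * (r:ℝ) - 1) * e = 1 by
          rw [hedef, div_mul_eq_mul_div, div_eq_one_iff_eq (by linarith)]; ring,
        Real.rpow_one]
    calc C = (C ^ ((2:ℝ) / (2 * (r:ℝ) - 1))) ^ e := h1.symm
      _ < ((p : ℝ) ^ ν) ^ e := by
          exact Real.rpow_lt_rpow (Real.rpow_nonneg hC.le _) hbig he0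
  -- q^e > C * 2^(t-1)
  have hqcast : ((p : ℝ) ^ ν) * 2 ^ (t - 1) ≤ (q : ℝ) := by
    exact_mod_cast q_ge hp hpν1 hpνq hq0
  have hppos : (0:ℝ) < (p:ℝ) ^ ν := pow_pos (by exact_mod_cast hp.pos) ν
  have hqe : C * 2 ^ (t - 1) < (q : ℝ) ^ e := by
    have h2 : ((p : ℝ) ^ ν * 2 ^ (t - 1)) ^ e ≤ (q : ℝ) ^ e :=
      Real.rpow_le_rpow (by positivity) hqcast he0.le
    have h3 : ((p : ℝ) ^ ν * 2 ^ (t - 1)) ^ e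
        = ((p : ℝ) ^ ν) ^ e * ((2:ℝ) ^ (t - 1 : ℕ)) ^ e := by
      rw [Real.mul_rpow (by positivity) (by positivity)]
    have h4 : ((2:ℝ) ^ (t - 1 : ℕ)) ≤ ((2:ℝ) ^ (t - 1 : ℕ)) ^ e := by
      rw [← Real.rpow_natCast 2 (t - 1), ← Real.rpow_mul (by norm_num)]
      apply Real.rpow_le_rpow_of_exponent_le (by norm_num)
      nlinarith [Nat.cast_nonneg (α := ℝ) (t - 1)]
    have h5 : C * 2 ^ (t - 1) < ((p : ℝ) ^ ν) ^ e * ((2:ℝ) ^ (t - 1 : ℕ)) ^ e := by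
      have := mul_lt_mul_of_pos_right hpe (by positivity : (0:ℝ) < 2 ^ (t - 1 : ℕ))
      calc C * 2 ^ (t - 1) < ((p : ℝ) ^ ν) ^ e * 2 ^ (t - 1) := this
        _ ≤ ((p : ℝ) ^ ν) ^ e * ((2:ℝ) ^ (t - 1 : ℕ)) ^ e := by
            apply mul_le_mul_of_nonneg_left h4 (by positivity)
    linarith [h3 ▸ h2]
  -- L-value bound
  set absLr : ℝ := ‖χ.LFunction (r : ℂ)‖ with habsLr
  have hLbound : zr (2 * r) / zr r ≤ absLr := by
    have h := abs_LSeries_ge r hr χ hquad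
    rw [habsLr, DirichletCharacter.LFunction_eq_LSeries χ (by simp; exact_mod_cast by omega)]
    rw [div_le_iff₀ hz1]
    linarith [h]
  have habsLr_pos : 0 < absLr := lt_of_lt_of_le (by positivity) hLbound
  -- functional equation
  rw [gt_iff_lt, lt_div_iff₀ (by positivity : (0:ℝ) < 2 ^ t),
    abs_LFunction_one_sub r hr hq χ hprim hquad hparity]
  have hsqrt : Real.sqrt q * (q : ℝ) ^ ((r : ℝ) - 1) = (q : ℝ) ^ e := by
    rw [Real.sqrt_eq_rpow, ← Real.rpow_add (by positivity : (0:ℝ) < (q:ℝ))]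
    congr 1
    rw [hedef]; ring
  have hM : (0:ℝ) < 2 * G * ((2 * π) ^ r)⁻¹ :=
    mul_pos (mul_pos two_pos hG) (inv_pos.mpr hP)
  have htt : t - 1 + 1 = t := by omega
  have h2t : (2:ℝ) ^ t = 2 * 2 ^ (t - 1) := by conv_lhs => rw [← htt, pow_succ']
  have eq0 : K * 2 ^ t = 2 * G * ((2 * π) ^ r)⁻¹ * (C * 2 ^ (t - 1)) * (zr (2 * r) / zr r) := by
    rw [h2t, hCdef]
    field_simp
  calc K * 2 ^ t
      = 2 * G * ((2 * π) ^ r)⁻¹ * (C * 2 ^ (t - 1)) * (zr (2 * r) / zr r) := eq0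
    _ < 2 * G * ((2 * π) ^ r)⁻¹ * ((q : ℝ) ^ e) * (zr (2 * r) / zr r) :=
        mul_lt_mul_of_pos_right (mul_lt_mul_of_pos_left hqe hM) (div_pos hz2 hz1)
    _ ≤ 2 * G * ((2 * π) ^ r)⁻¹ * ((q : ℝ) ^ e) * absLr := by
        apply mul_le_mul_of_nonneg_left hLbound
        exact (mul_pos hM (Real.rpow_pos_of_pos (by positivity) e)).le
    _ = 2 * G * ((2 * π) ^ r)⁻¹ * Real.sqrt q * (q : ℝ) ^ ((r : ℝ) - 1) *
          ‖χ.LFunction (r : ℂ)‖ := by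
        rw [habsLr, ← hsqrt]; ring
end

section
/- For every quadratic Dirichlet character χ mod q and every real number s > 1, the value L(s, χ) of the Dirichlet L-function is a real number satisfying L(s, χ) ≥ ζ(2s)/ζ(s) > 0. -/
open LSeries ArithmeticFunction Finset
open scoped LSeries.notation ArithmeticFunction.zeta

namespace QuadAuxLGZ

variable {q : ℕ} [NeZero q] (χ : DirichletCharacter ℂ q)

/-- `χ` as a real-valued arithmetic function. -/
noncomputable def fchi : ArithmeticFunction ℝ :=
  ⟨fun n => if n = 0 then 0 else (χ n).re, by simp⟩

lemma fchi_apply {n : ℕ} (hn : n ≠ 0) : fchi χ n = (χ n).re := by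
  simp [fchi, hn]

lemma chi_eq_ofReal (hquad : χ.IsQuadratic) (n : ℕ) :
    (χ n : ℂ) = (((χ n).re : ℝ) : ℂ) := by
  rcases hquad (n : ZMod q) with h | h | h <;> rw [h] <;> simp

lemma chi_im (hquad : χ.IsQuadratic) (n : ℕ) : (χ n : ℂ).im = 0 := by
  rcases hquad (n : ZMod q) with h | h | h <;> rw [h] <;> simp

lemma chiR_mul (hquad : χ.IsQuadratic) (m n : ℕ) :
    (χ (↑(m * n)) : ℂ).re = (χ m).re * (χ n).re := by
  rw [Nat.cast_mul, map_mul, Complex.mul_re, chi_im χ hquad m, chi_im χ hquad n,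
    mul_zero, sub_zero]

lemma fchi_isMultiplicative (hquad : χ.IsQuadratic) : (fchi χ).IsMultiplicative := by
  constructor
  · rw [fchi_apply χ one_ne_zero]
    simp
  · intro m n _
    rcases eq_or_ne m 0 with rfl | hm
    · simp [fchi]
    rcases eq_or_ne n 0 with rfl | hn
    · simp [fchi]
    rw [fchi_apply χ (mul_ne_zero hm hn), fchi_apply χ hm, fchi_apply χ hn,
      chiR_mul χ hquad]

lemma even_factorization_of_isSquare {n : ℕ} (hn : IsSquare n) (p : ℕ) :
    Even (n.factorization p) := by
  obtain ⟨r, rfl⟩ := hn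
  rcases eq_or_ne r 0 with rfl | hr
  · simp
  · rw [Nat.factorization_mul hr hr, Finsupp.add_apply]
    exact Even.add_self _

lemma key (hquad : χ.IsQuadratic) (n : ℕ) (hn : n ≠ 0) :
    0 ≤ (fchi χ * ζ) n ∧ (IsSquare n → 1 ≤ (fchi χ * ζ) n) := by
  have hgm : (fchi χ * ζ).IsMultiplicative :=
    (fchi_isMultiplicative χ hquad).mul isMultiplicative_zeta.natCast
  have hpp : ∀ p k : ℕ, p.Prime →
      0 ≤ (fchi χ * ζ) (p ^ k) ∧ (Even k → 1 ≤ (fchi χ * ζ) (p ^ k)) := by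
    intro p k hp
    have h1 : (fchi χ * ζ) (p ^ k) = ∑ j ∈ range (k + 1), ((χ p : ℂ).re) ^ j := by
      rw [coe_mul_zeta_apply, Nat.sum_divisors_prime_pow hp]
      refine Finset.sum_congr rfl fun j _ => ?_
      rw [fchi_apply χ (pow_ne_zero j hp.ne_zero)]
      have h2 : (χ (↑(p ^ j)) : ℂ) = ((((χ p : ℂ).re) ^ j : ℝ) : ℂ) := by
        rw [Nat.cast_pow, map_pow, chi_eq_ofReal χ hquad p, Complex.ofReal_pow]
        simp
      rw [h2, Complex.ofReal_re]
    rcases hquad (p : ZMod q) with h | h | h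
    · have hr : (χ (p : ZMod q) : ℂ).re = 0 := by rw [h]; simp
      have hsum : (fchi χ * ζ) (p ^ k) = 1 := by
        rw [h1, hr]
        rw [Finset.sum_eq_single_of_mem 0 (Finset.mem_range.mpr k.succ_pos)
          (fun j _ hj => by rw [zero_pow hj])]
        simp
      rw [hsum]
      exact ⟨zero_le_one, fun _ => le_refl 1⟩
    · have hr : (χ (p : ZMod q) : ℂ).re = 1 := by rw [h]; simp
      have hsum : (fchi χ * ζ) (p ^ k) = (k + 1 : ℝ) := by
        rw [h1, hr]
        simp
      rw [hsum]
      constructor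
      · positivity
      · intro _
        have : (0 : ℝ) ≤ (k : ℝ) := Nat.cast_nonneg k
        linarith
    · have hr : (χ (p : ZMod q) : ℂ).re = -1 := by rw [h]; simp
      have hsum : (fchi χ * ζ) (p ^ k) =
          if Even (k + 1) then (0 : ℝ) else 1 := by
        rw [h1, hr, neg_one_geom_sum]
      rcases Nat.even_or_odd k with hk | hk
      · have : ¬ Even (k + 1) := by simp [Nat.even_add_one, hk]
        rw [hsum, if_neg this]
        exact ⟨zero_le_one, fun _ => le_refl 1⟩
      · have : Even (k + 1) := by
          rw [Nat.even_add_one]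
          exact Nat.not_even_iff_odd.mpr hk
        rw [hsum, if_pos this]
        refine ⟨le_refl 0, fun hsq => absurd hsq ?_⟩
        exact Nat.not_even_iff_odd.mpr hk
  rw [ArithmeticFunction.IsMultiplicative.multiplicative_factorization _ hgm hn,
    Finsupp.prod]
  constructor
  · refine Finset.prod_nonneg fun p hp => ?_
    exact (hpp p _ (Nat.prime_of_mem_primeFactors
      (by rwa [← Nat.support_factorization]))).1
  · intro hsq
    calc (1 : ℝ) = ∏ _p ∈ n.factorization.support, 1 := by simp
      _ ≤ ∏ p ∈ n.factorization.support, (fchi χ * ζ) (p ^ n.factorization p) := by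
          refine Finset.prod_le_prod (by simp) fun p hp => ?_
          exact (hpp p _ (Nat.prime_of_mem_primeFactors
            (by rwa [← Nat.support_factorization]))).2
            (even_factorization_of_isSquare hsq p)

lemma term_eq_ofReal {f : ℕ → ℂ} {r : ℕ → ℝ} (h : ∀ n, n ≠ 0 → f n = (r n : ℂ))
    (s : ℝ) (n : ℕ) :
    LSeries.term f (s : ℂ) n
      = (((if n = 0 then 0 else r n / (n : ℝ) ^ s) : ℝ) : ℂ) := by
  rcases eq_or_ne n 0 with rfl | hn
  · simp [LSeries.term]
  · rw [LSeries.term_of_ne_zero hn, if_neg hn, h n hn]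
    have h2 : ((n : ℂ)) ^ (s : ℂ) = ((((n : ℝ) ^ s : ℝ)) : ℂ) := by
      rw [Complex.ofReal_cpow (Nat.cast_nonneg n) s, Complex.ofReal_natCast]
    rw [h2, ← Complex.ofReal_div]

lemma LSeries_eq_ofReal {f : ℕ → ℂ} {r : ℕ → ℝ} (h : ∀ n, n ≠ 0 → f n = (r n : ℂ))
    (s : ℝ) :
    LSeries f (s : ℂ)
      = (((∑' n : ℕ, if n = 0 then 0 else r n / (n : ℝ) ^ s) : ℝ) : ℂ) := by
  rw [LSeries, Complex.ofReal_tsum]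
  exact tsum_congr fun n => term_eq_ofReal h s n

lemma summable_real {f : ℕ → ℂ} {r : ℕ → ℝ} (h : ∀ n, n ≠ 0 → f n = (r n : ℂ))
    {s : ℝ} (hf : LSeriesSummable f (s : ℂ)) :
    Summable fun n : ℕ => if n = 0 then (0 : ℝ) else r n / (n : ℝ) ^ s := by
  have h1 : Summable fun n : ℕ =>
      (((if n = 0 then 0 else r n / (n : ℝ) ^ s) : ℝ) : ℂ) := by
    refine hf.congr fun n => ?_
    exact term_eq_ofReal h s n
  exact Complex.summable_ofReal.mp h1

end QuadAuxLGZ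

open QuadAuxLGZ LSeries ArithmeticFunction
open scoped LSeries.notation ArithmeticFunction.zeta

/-- For every quadratic Dirichlet character `χ` mod `q` and every real `s > 1`, the value
`L(s, χ)` of the Dirichlet L-function is a real number satisfying `L(s, χ) ≥ ζ(2s)/ζ(s) > 0`. -/
theorem LFunction_real_ge_zeta_ratio (q : ℕ) [NeZero q] (χ : DirichletCharacter ℂ q)
    (hquad : χ.IsQuadratic) (s : ℝ) (hs : 1 < s) :
    (χ.LFunction (s : ℂ)).im = 0 ∧
      (χ.LFunction (s : ℂ)).re ≥ (riemannZeta (2 * s)).re / (riemannZeta (s : ℂ)).re ∧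
      (riemannZeta (2 * s)).re / (riemannZeta (s : ℂ)).re > 0 := by
  have hs1 : 1 < ((s : ℂ)).re := by simpa using hs
  have hs2 : 1 < (((2 * s : ℝ) : ℂ)).re := by
    simp only [Complex.ofReal_re]
    linarith
  -- value descriptions
  have hχ : ∀ n : ℕ, n ≠ 0 → (↗χ) n = ((fchi χ n : ℝ) : ℂ) := fun n hn => by
    rw [fchi_apply χ hn]
    exact chi_eq_ofReal χ hquad n
  have h1 : ∀ n : ℕ, n ≠ 0 → (1 : ℕ → ℂ) n = (((fun _ : ℕ => (1 : ℝ)) n : ℝ) : ℂ) := by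
    intro n _
    simp
  have hF : ∀ n : ℕ, n ≠ 0 → (↗χ ⍟ 1) n = (((fchi χ * ζ) n : ℝ) : ℂ) := by
    intro n hn
    have h4 : (↗χ ⍟ 1) n = ∑ i ∈ n.divisors, (χ (i : ℕ) : ℂ) := by
      simp only [LSeries.convolution_def, Pi.one_apply, mul_one]
      exact Nat.sum_divisorsAntidiagonal fun a _ => (χ (a : ℕ) : ℂ)
    rw [h4, coe_mul_zeta_apply, Complex.ofReal_sum]
    refine Finset.sum_congr rfl fun i hi => ?_
    exact hχ i (Nat.pos_of_mem_divisors hi).ne'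
  -- summability
  have hχsum : LSeriesSummable (↗χ) (s : ℂ) :=
    DirichletCharacter.LSeriesSummable_of_one_lt_re χ hs1
  have h1sum : LSeriesSummable (1 : ℕ → ℂ) (s : ℂ) := LSeriesSummable_one_iff.mpr hs1
  have h1sum2 : LSeriesSummable (1 : ℕ → ℂ) ((2 * s : ℝ) : ℂ) :=
    LSeriesSummable_one_iff.mpr hs2
  have hFsum : LSeriesSummable (↗χ ⍟ 1) (s : ℂ) := hχsum.convolution h1sum
  -- real series
  set Tχ : ℕ → ℝ := fun n => if n = 0 then 0 else fchi χ n / (n : ℝ) ^ s with hTχdef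
  set T1 : ℕ → ℝ := fun n => if n = 0 then 0 else 1 / (n : ℝ) ^ s with hT1def
  set T2 : ℕ → ℝ := fun n => if n = 0 then 0 else 1 / (n : ℝ) ^ (2 * s) with hT2def
  set TF : ℕ → ℝ := fun n => if n = 0 then 0 else (fchi χ * ζ) n / (n : ℝ) ^ s with hTFdef
  set TS : ℕ → ℝ :=
    fun n => if n = 0 then 0 else (if IsSquare n then (1 : ℝ) else 0) / (n : ℝ) ^ s
    with hTSdef
  have hTχsum : Summable Tχ := summable_real hχ hχsum
  have hT1sum : Summable T1 := summable_real h1 h1sum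
  have hT2sum : Summable T2 := summable_real h1 h1sum2
  have hTFsum : Summable TF := summable_real hF hFsum
  -- identifications
  have hLF : χ.LFunction (s : ℂ) = ((∑' n, Tχ n : ℝ) : ℂ) := by
    rw [DirichletCharacter.LFunction_eq_LSeries χ hs1, LSeries_eq_ofReal hχ s]
  have hZ : riemannZeta (s : ℂ) = ((∑' n, T1 n : ℝ) : ℂ) := by
    rw [← LSeries_one_eq_riemannZeta hs1, LSeries_eq_ofReal h1 s]
  have hZ2 : riemannZeta (2 * (s : ℂ)) = ((∑' n, T2 n : ℝ) : ℂ) := by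
    have h2s : (2 * (s : ℂ)) = (((2 * s : ℝ)) : ℂ) := by push_cast; ring
    rw [h2s, ← LSeries_one_eq_riemannZeta hs2, LSeries_eq_ofReal h1 (2 * s)]
  have hprod : (∑' n, TF n) = (∑' n, Tχ n) * (∑' n, T1 n) := by
    have h3 : LSeries (↗χ ⍟ 1) (s : ℂ) = LSeries (↗χ) (s : ℂ) * LSeries (1 : ℕ → ℂ) (s : ℂ) :=
      LSeries_convolution' hχsum h1sum
    rw [LSeries_eq_ofReal hF s, LSeries_eq_ofReal hχ s, LSeries_eq_ofReal h1 s,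
      ← Complex.ofReal_mul] at h3
    exact_mod_cast h3
  -- termwise inequalities
  have hTSnn : ∀ n, 0 ≤ TS n := by
    intro n
    rw [hTSdef]
    dsimp only
    split_ifs with h h'
    · exact le_refl 0
    · positivity
    · positivity
  have hTSle : ∀ n, TS n ≤ TF n := by
    intro n
    rcases eq_or_ne n 0 with rfl | hn
    · simp [hTSdef, hTFdef]
    have hpos : (0 : ℝ) < (n : ℝ) ^ s := by
      have : (0 : ℝ) < (n : ℝ) := by exact_mod_cast Nat.pos_of_ne_zero hn
      positivity
    rw [hTSdef, hTFdef]
    dsimp only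
    rw [if_neg hn, if_neg hn]
    gcongr
    split_ifs with hsq
    · exact (key χ hquad n hn).2 hsq
    · exact (key χ hquad n hn).1
  have hTSsum : Summable TS := Summable.of_nonneg_of_le hTSnn hTSle hTFsum
  -- ∑ TS = ∑ T2
  have hTS_eq : (∑' n, TS n) = ∑' n, T2 n := by
    have hinj : Function.Injective fun m : ℕ => m ^ 2 :=
      fun a b h => Nat.pow_left_injective two_ne_zero h
    have hsupp : Function.support TS ⊆ Set.range fun m : ℕ => m ^ 2 := by
      intro n hn
      rw [Function.mem_support] at hn
      rw [hTSdef] at hn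
      dsimp only at hn
      by_cases h0 : n = 0
      · exact ⟨0, by simp [h0]⟩
      rw [if_neg h0] at hn
      by_cases hsq : IsSquare n
      · obtain ⟨r, hr⟩ := hsq
        exact ⟨r, by show r ^ 2 = n; rw [sq]; exact hr.symm⟩
      · rw [if_neg hsq, zero_div] at hn
        exact absurd rfl hn
    rw [← Function.Injective.tsum_eq hinj hsupp]
    refine tsum_congr fun m => ?_
    rcases eq_or_ne m 0 with rfl | hm
    · simp [hTSdef, hT2def]
    have hm2 : m ^ 2 ≠ 0 := pow_ne_zero 2 hm
    have hsq : IsSquare (m ^ 2) := ⟨m, sq m⟩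
    rw [hTSdef, hT2def]
    dsimp only
    rw [if_neg hm2, if_neg hm, if_pos hsq]
    congr 1
    have h1' : ((m ^ 2 : ℕ) : ℝ) = (m : ℝ) ^ (2 : ℕ) := by push_cast; ring
    rw [h1', ← Real.rpow_natCast ((m : ℝ)) 2, ← Real.rpow_mul (Nat.cast_nonneg m)]
    norm_num
  -- positivity of zeta sums
  have hT1nn : ∀ n, 0 ≤ T1 n := by
    intro n
    rw [hT1def]
    dsimp only
    split_ifs with h
    · exact le_refl 0
    · positivity
  have hT2nn : ∀ n, 0 ≤ T2 n := by
    intro n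
    rw [hT2def]
    dsimp only
    split_ifs with h
    · exact le_refl 0
    · positivity
  have hZ1 : 1 ≤ ∑' n, T1 n := by
    have h11 : T1 1 = 1 := by
      rw [hT1def]
      norm_num
    calc (1 : ℝ) = T1 1 := h11.symm
      _ ≤ ∑' n, T1 n := Summable.le_tsum hT1sum 1 fun j _ => hT1nn j
  have hZ21 : 1 ≤ ∑' n, T2 n := by
    have h11 : T2 1 = 1 := by
      rw [hT2def]
      norm_num
    calc (1 : ℝ) = T2 1 := h11.symm
      _ ≤ ∑' n, T2 n := Summable.le_tsum hT2sum 1 fun j _ => hT2nn j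
  have hZpos : 0 < ∑' n, T1 n := lt_of_lt_of_le one_pos hZ1
  have hZ2pos : 0 < ∑' n, T2 n := lt_of_lt_of_le one_pos hZ21
  -- conclude
  have hre2 : (riemannZeta (2 * (s : ℂ))).re = ∑' n, T2 n := by rw [hZ2, Complex.ofReal_re]
  have hre1 : (riemannZeta (s : ℂ)).re = ∑' n, T1 n := by rw [hZ, Complex.ofReal_re]
  have hreL : (χ.LFunction (s : ℂ)).re = ∑' n, Tχ n := by rw [hLF, Complex.ofReal_re]
  refine ⟨by rw [hLF]; exact Complex.ofReal_im _, ?_, ?_⟩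
  · rw [hreL, hre1, hre2, ge_iff_le, div_le_iff₀ hZpos, ← hprod, ← hTS_eq]
    exact Summable.tsum_le_tsum hTSle hTSsum hTFsum
  · rw [hre1, hre2]
    exact div_pos hZ2pos hZpos
end

section
/- Let r ≥ 2 be an integer and let χ be a primitive quadratic Dirichlet character of conductor q > 1 with χ(−1) = (−1)^r. Then |L(1−r, χ)| ≥ q^{r−1/2} · 2·Γ(r)·ζ(2r) / ((2π)^r·ζ(r)). -/
open scoped Real

open Complex LSeries.notation

-- injectivity of (b, n) ↦ n * b^2 on b ≠ 0, n squarefree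
private lemma sqfree_pair_inj :
    Function.Injective
      (fun p : {p : ℕ × ℕ // p.1 ≠ 0 ∧ Squarefree p.2} => p.1.2 * p.1.1 ^ 2) := by
  rintro ⟨⟨b₁, n₁⟩, hb₁, hn₁⟩ ⟨⟨b₂, n₂⟩, hb₂, hn₂⟩ h
  replace h : n₁ * b₁ ^ 2 = n₂ * b₂ ^ 2 := h
  have hn₁0 : n₁ ≠ 0 := hn₁.ne_zero
  have hn₂0 : n₂ ≠ 0 := hn₂.ne_zero
  have hfac : n₁.factorization = n₂.factorization := by
    ext p
    have h1 := congrArg (fun m : ℕ => m.factorization p) h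
    simp only [Nat.factorization_mul hn₁0 (pow_ne_zero 2 hb₁),
      Nat.factorization_mul hn₂0 (pow_ne_zero 2 hb₂), Nat.factorization_pow,
      Finsupp.add_apply, Finsupp.smul_apply, smul_eq_mul] at h1
    have l1 : n₁.factorization p ≤ 1 := hn₁.natFactorization_le_one p
    have l2 : n₂.factorization p ≤ 1 := hn₂.natFactorization_le_one p
    omega
  have hnn : n₁ = n₂ := Nat.factorization_inj hn₁0 hn₂0 hfac
  subst hnn
  have hbb : b₁ ^ 2 = b₂ ^ 2 := Nat.eq_of_mul_eq_mul_left (Nat.pos_of_ne_zero hn₁0) h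
  have : b₁ = b₂ := Nat.pow_left_injective (by norm_num) hbb
  simp [this]

private lemma summable_one_div_pow {k : ℕ} (hk : 2 ≤ k) :
    Summable (fun n : ℕ => 1 / (n : ℝ) ^ k) :=
  Real.summable_one_div_nat_pow.mpr hk

private lemma zeta_re_eq {k : ℕ} (hk : 2 ≤ k) :
    (riemannZeta k).re = ∑' n : ℕ, 1 / (n : ℝ) ^ k := by
  have hsum : Summable (fun n : ℕ => (1 / (n : ℂ) ^ k)) := by
    refine Summable.of_norm ?_
    have : (fun n : ℕ => ‖1 / (n : ℂ) ^ k‖) = fun n : ℕ => 1 / (n : ℝ) ^ k := by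
      funext n
      simp [norm_div, norm_pow]
    rw [this]
    exact summable_one_div_pow hk
  rw [zeta_nat_eq_tsum_of_gt_one (by omega : 1 < k), Complex.re_tsum hsum]
  congr 1 with n
  have : (1 / (n : ℂ) ^ k) = ((1 / (n : ℝ) ^ k : ℝ) : ℂ) := by push_cast; ring
  rw [this, Complex.ofReal_re]

private lemma zeta_re_pos {k : ℕ} (hk : 2 ≤ k) : 0 < (riemannZeta k).re := by
  rw [zeta_re_eq hk]
  refine Summable.tsum_pos (summable_one_div_pow hk) (fun n => by positivity) 1 (by norm_num)

private lemma LSeries_abs_lower_bound {q : ℕ} [NeZero q] {r : ℕ} (hr : 2 ≤ r)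
    (χ : DirichletCharacter ℂ q) (hquad : χ.IsQuadratic) :
    (∑' n : ℕ, 1 / (n : ℝ) ^ (2 * r)) ≤
      (∑' n : ℕ, 1 / (n : ℝ) ^ r) * ‖LSeries ↗χ (r : ℂ)‖ := by
  have hre : 1 < ((r : ℕ) : ℂ).re := by
    simp only [Complex.natCast_re]
    exact_mod_cast (by omega : 1 < r)
  have hμ : LSeriesSummable ↗ArithmeticFunction.moebius (r : ℂ) :=
    ArithmeticFunction.LSeriesSummable_moebius_iff.mpr hre
  have hsummul : LSeriesSummable (↗χ * ↗ArithmeticFunction.moebius) (r : ℂ) :=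
    DirichletCharacter.LSeriesSummable_mul χ hμ
  have hprod := DirichletCharacter.LSeries.mul_mu_eq_one χ hre
  set m : ℕ → ℝ := fun n => if Squarefree n then 1 / (n : ℝ) ^ r else 0 with hm
  have hmnonneg : ∀ n, 0 ≤ m n := fun n => by
    rw [hm]; dsimp only; split <;> positivity
  have hmle : ∀ n, m n ≤ 1 / (n : ℝ) ^ r := fun n => by
    rw [hm]; dsimp only; split
    · exact le_rfl
    · positivity
  have hMsum : Summable m :=
    (summable_one_div_pow hr).of_nonneg_of_le hmnonneg hmle
  -- pointwise bound on the terms of the twisted series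
  have hpt : ∀ n, ‖LSeries.term (↗χ * ↗ArithmeticFunction.moebius) (r : ℂ) n‖ ≤ m n := by
    intro n
    rw [LSeries.norm_term_eq]
    rcases eq_or_ne n 0 with rfl | hn
    · simpa using hmnonneg 0
    · rw [if_neg hn]
      by_cases hsq : Squarefree n
      · have hμ1 : ‖((ArithmeticFunction.moebius n : ℤ) : ℂ)‖ = 1 := by
          rw [Complex.norm_intCast]
          exact_mod_cast ArithmeticFunction.abs_moebius_eq_one_of_squarefree hsq
        have hχ1 : ‖(χ n : ℂ)‖ ≤ 1 := by
          rcases hquad n with h | h | h <;> simp [h]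
        have hnorm : ‖(↗χ * ↗ArithmeticFunction.moebius) n‖ ≤ 1 := by
          simp only [Pi.mul_apply, norm_mul, hμ1, mul_one]
          exact hχ1
        rw [hm]; dsimp only; rw [if_pos hsq]
        have hrre : ((r:ℕ):ℂ).re = (r : ℝ) := by simp
        rw [hrre, Real.rpow_natCast]
        have hpow : (0:ℝ) < (n : ℝ) ^ r := by
          have : (0:ℝ) < (n:ℝ) := by exact_mod_cast Nat.pos_of_ne_zero hn
          positivity
        exact (div_le_div_iff_of_pos_right hpow).mpr hnorm
      · have : ArithmeticFunction.moebius n = 0 :=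
          ArithmeticFunction.moebius_eq_zero_of_not_squarefree hsq
        simp only [Pi.mul_apply, this, Int.cast_zero, mul_zero, norm_zero, zero_div]
        rw [hm]; dsimp only; rw [if_neg hsq]
  have hnormsum : Summable (fun n => ‖LSeries.term (↗χ * ↗ArithmeticFunction.moebius) (r : ℂ) n‖) :=
    summable_norm_iff.mpr hsummul
  have habsle : ‖LSeries (↗χ * ↗ArithmeticFunction.moebius) (r : ℂ)‖ ≤ ∑' n, m n := by
    refine (norm_tsum_le_tsum_norm hnormsum).trans ?_
    exact Summable.tsum_le_tsum hpt hnormsum hMsum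
  -- the product of zeta(2r) and the squarefree series is at most zeta(r)
  set Z1 : ℝ := ∑' n : ℕ, 1 / (n : ℝ) ^ r with hZ1
  set Z2 : ℝ := ∑' n : ℕ, 1 / (n : ℝ) ^ (2 * r) with hZ2
  have hZ1sum : Summable (fun n : ℕ => 1 / (n : ℝ) ^ r) := summable_one_div_pow hr
  have hZ2sum : Summable (fun n : ℕ => 1 / (n : ℝ) ^ (2 * r)) :=
    summable_one_div_pow (by omega)
  have hZ2normsum : Summable (fun n : ℕ => ‖1 / (n : ℝ) ^ (2 * r)‖) := by
    refine hZ2sum.congr fun n => ?_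
    rw [Real.norm_of_nonneg (by positivity)]
  have hmnormsum : Summable (fun n : ℕ => ‖m n‖) := by
    refine hMsum.congr fun n => ?_
    rw [Real.norm_of_nonneg (hmnonneg n)]
  set H : ℕ × ℕ → ℝ :=
    fun p => if p.1 ≠ 0 ∧ Squarefree p.2 then 1 / ((p.2 * p.1 ^ 2 : ℕ) : ℝ) ^ r else 0 with hH
  have hHeq : ∀ p : ℕ × ℕ, (1 / (p.1 : ℝ) ^ (2 * r)) * m p.2 = H p := by
    rintro ⟨b, n⟩
    rw [hH, hm]; dsimp only
    rcases eq_or_ne b 0 with rfl | hb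
    · rw [Nat.cast_zero, zero_pow (by omega : 2 * r ≠ 0), div_zero, zero_mul,
        if_neg (fun hcon => hcon.1 rfl)]
    · by_cases hsq : Squarefree n
      · rw [if_pos hsq, if_pos ⟨hb, hsq⟩]
        have hb0 : (0:ℝ) < (b:ℝ) := by exact_mod_cast Nat.pos_of_ne_zero hb
        have hn0 : (0:ℝ) < (n:ℝ) := by exact_mod_cast Nat.pos_of_ne_zero hsq.ne_zero
        push_cast
        rw [mul_pow, ← pow_mul, mul_comm 2 r]
        field_simp
      · rw [if_neg hsq, if_neg (by tauto), mul_zero]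
  have hmul : Z2 * (∑' n, m n) = ∑' p : ℕ × ℕ, H p := by
    rw [hZ2, tsum_mul_tsum_of_summable_norm hZ2normsum hmnormsum]
    exact tsum_congr hHeq
  have hHsum : Summable H :=
    (summable_mul_of_summable_norm hZ2normsum hmnormsum).congr hHeq
  have hHnonneg : ∀ p, 0 ≤ H p := fun p => by
    rw [hH]; dsimp only; split <;> positivity
  have hsupp : Function.support H ⊆ {p : ℕ × ℕ | p.1 ≠ 0 ∧ Squarefree p.2} := by
    intro p hp
    by_contra hc
    exact hp (by rw [hH]; dsimp only; rw [if_neg (by simpa using hc)])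
  have hZ2M : Z2 * (∑' n, m n) ≤ Z1 := by
    rw [hmul, ← tsum_subtype_eq_of_support_subset hsupp]
    refine Summable.tsum_le_tsum_of_inj
      (fun p : {p : ℕ × ℕ // p.1 ≠ 0 ∧ Squarefree p.2} => p.1.2 * p.1.1 ^ 2)
      sqfree_pair_inj (fun c _ => by positivity) ?_ (hHsum.subtype _) hZ1sum
    rintro ⟨⟨b, n⟩, hbn⟩
    rw [hH]; dsimp only
    rw [if_pos (show _ ≠ 0 ∧ Squarefree _ by simpa using hbn)]
  -- conclude
  have hLnn : (0:ℝ) ≤ ‖LSeries ↗χ (r : ℂ)‖ := norm_nonneg _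
  have hZ2nn : (0:ℝ) ≤ Z2 := tsum_nonneg fun n => by positivity
  have h1 : 1 ≤ ‖LSeries ↗χ (r : ℂ)‖ * (∑' n, m n) := by
    have := congrArg norm hprod
    rw [norm_mul, norm_one] at this
    calc (1:ℝ) = ‖LSeries ↗χ (r : ℂ)‖ * ‖LSeries (↗χ * ↗ArithmeticFunction.moebius) (r : ℂ)‖ :=
          this.symm
      _ ≤ _ := by gcongr
  calc Z2 = Z2 * 1 := (mul_one Z2).symm
    _ ≤ Z2 * (‖LSeries ↗χ (r : ℂ)‖ * (∑' n, m n)) := by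
        exact mul_le_mul_of_nonneg_left h1 hZ2nn
    _ = (Z2 * (∑' n, m n)) * ‖LSeries ↗χ (r : ℂ)‖ := by ring
    _ ≤ Z1 * ‖LSeries ↗χ (r : ℂ)‖ := mul_le_mul_of_nonneg_right hZ2M hLnn

open scoped ZMod in
private lemma ZModLFunction_const_mul {N : ℕ} [NeZero N] (c : ℂ) (Φ : ZMod N → ℂ) (s : ℂ) :
    ZMod.LFunction (fun j => c * Φ j) s = c * ZMod.LFunction Φ s := by
  rw [ZMod.LFunction, ZMod.LFunction,
    show ∑ j : ZMod N, c * Φ j * HurwitzZeta.hurwitzZeta (ZMod.toAddCircle j) s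
      = c * ∑ j : ZMod N, Φ j * HurwitzZeta.hurwitzZeta (ZMod.toAddCircle j) s by
      rw [Finset.mul_sum]; exact Finset.sum_congr rfl fun j _ => by ring]
  ring

open scoped ZMod

/-- Let `r ≥ 2` be an integer and `χ` a primitive quadratic Dirichlet character of conductor
`q > 1` with `χ(-1) = (-1)^r`.  Then
`|L(1-r, χ)| ≥ q^(r-1/2) · 2·Γ(r)·ζ(2r) / ((2π)^r·ζ(r))`. -/
theorem abs_LFunction_one_sub_lower_bound (r : ℕ) (hr : 2 ≤ r) (q : ℕ) [NeZero q] (hq : 1 < q)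
    (χ : DirichletCharacter ℂ q) (hprim : χ.IsPrimitive) (hquad : χ.IsQuadratic)
    (hparity : χ (-1) = (-1 : ℂ) ^ r) :
    ‖χ.LFunction (1 - r)‖ ≥
      (q : ℝ) ^ ((r : ℝ) - 1/2) * (2 * Real.Gamma r * (riemannZeta (2 * r)).re) /
        ((2 * π) ^ r * (riemannZeta r).re) := by
  have hπ := Real.pi_pos
  set s : ℂ := (r : ℂ) with hs
  have hre : 1 < s.re := by
    rw [hs]; simp only [Complex.natCast_re]; exact_mod_cast (by omega : 1 < r)
  have hq0 : (0:ℝ) < q := by exact_mod_cast Nat.pos_of_ne_zero (by omega)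
  have hr0 : (0:ℝ) < (r:ℝ) := by exact_mod_cast (by omega : 0 < r)
  have hGpos : 0 < Real.Gamma r := Real.Gamma_pos_of_pos hr0
  have hχne : χ ≠ 1 := by
    intro h
    rw [DirichletCharacter.IsPrimitive, h,
      DirichletCharacter.conductor_one] at hprim
    omega
  set g : ℂ := gaussSum χ ZMod.stdAddChar with hg
  -- functional equation
  have hFE := ZMod.LFunction_one_sub (⇑χ) (s := s)
    (fun n hn => by
      have := congrArg Complex.re hn
      simp only [hs, Complex.natCast_re, Complex.neg_re] at this
      have h2 : (2:ℝ) ≤ (r:ℝ) := by exact_mod_cast hr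
      have h3 : (0:ℝ) ≤ (n:ℝ) := Nat.cast_nonneg n
      linarith)
    (Or.inr (by
      rw [hs]
      intro h
      have : r = 1 := by exact_mod_cast h
      omega))
  have hF1 : (𝓕 ⇑χ) = fun k => ((-1:ℂ) ^ r * g) * χ k := by
    funext k
    rw [hprim.fourierTransform_eq_inv_mul_gaussSum k, hquad.inv,
      show -k = (-1) * k from (neg_one_mul k).symm, map_mul, hparity, ← hg]
    ring
  have hneg1 : ((-1:ℂ)) ^ r * (-1:ℂ) ^ r = 1 := by
    rw [← pow_add]
    exact Even.neg_one_pow ⟨r, rfl⟩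
  have hg2 : g ^ 2 = χ (-1) * q := by
    have h1 := congrFun (ZMod.dft_dft (⇑χ)) 1
    simp only [hF1, ZMod.dft_const_mul] at h1
    simp only [map_one, mul_one, smul_eq_mul] at h1
    linear_combination h1 - g ^ 2 * hneg1
  have habsg : ‖g‖ = Real.sqrt q := by
    have h1 : ‖g‖ ^ 2 = (q:ℝ) := by
      rw [← norm_pow, hg2, norm_mul, hparity, norm_pow]
      simp
    rw [show (q:ℝ) = ‖g‖ ^ 2 from h1.symm, Real.sqrt_sq (norm_nonneg g)]
  have hF2 : (𝓕 fun x : ZMod q => χ (-x)) = fun k => g * χ k := by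
    have hneg : (fun x : ZMod q => χ (-x)) = fun x => ((-1:ℂ) ^ r) * χ x := by
      funext x
      rw [show (-x) = (-1) * x from (neg_one_mul x).symm, map_mul, hparity]
    rw [hneg, ZMod.dft_const_mul]
    funext k
    rw [hF1]
    dsimp only
    rw [← mul_assoc, ← mul_assoc, hneg1, one_mul]
  rw [hF1, hF2, ZModLFunction_const_mul, ZModLFunction_const_mul] at hFE
  -- simplify the exponential factors
  have hpow' : ((-1:ℂ)) ^ r = Complex.exp (π * Complex.I * s) := by
    rw [hs, show (π : ℂ) * Complex.I * ((r:ℕ):ℂ) = ((r:ℕ):ℂ) * (π * Complex.I) by ring,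
      Complex.exp_nat_mul, Complex.exp_pi_mul_I]
  have hs2pi : Complex.exp (s * (2 * π * Complex.I)) = 1 := by
    rw [hs, Complex.exp_nat_mul, Complex.exp_two_pi_mul_I, one_pow]
  have hkey : Complex.exp (π * Complex.I * s / 2) * ((-1:ℂ)) ^ r
      = Complex.exp (-π * Complex.I * s / 2) := by
    rw [hpow', ← Complex.exp_add,
      show (π:ℂ) * Complex.I * s / 2 + π * Complex.I * s
        = -π * Complex.I * s / 2 + s * (2 * π * Complex.I) by ring,
      Complex.exp_add, hs2pi, mul_one]
  have hLHS : χ.LFunction (1 - s) = (q:ℂ) ^ (s - 1) * (2 * π) ^ (-s) * Complex.Gamma s *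
      (2 * Complex.exp (-π * Complex.I * s / 2) * (g * χ.LFunction s)) := by
    rw [show χ.LFunction (1 - s) = ZMod.LFunction (⇑χ) (1 - s) from rfl, hFE,
        show ZMod.LFunction (⇑χ) s = χ.LFunction s from rfl]
    linear_combination ((q:ℂ) ^ (s - 1) * (2 * (π:ℂ)) ^ (-s) * Complex.Gamma s *
      (g * χ.LFunction s)) * hkey
  -- absolute values
  have habsA : ‖(q:ℂ) ^ (s - 1)‖ = (q:ℝ) ^ ((r:ℝ) - 1) := by
    rw [show ((q:ℕ):ℂ) = (((q:ℝ)):ℂ) by push_cast; rfl,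
      Complex.norm_cpow_eq_rpow_re_of_pos hq0]
    norm_num [hs]
  have habsB : ‖((2:ℂ) * π) ^ (-s)‖ = ((2*π:ℝ) ^ r)⁻¹ := by
    rw [show ((2:ℂ) * (π:ℂ)) = (((2*π:ℝ)):ℂ) by push_cast; ring,
      Complex.norm_cpow_eq_rpow_re_of_pos (by positivity),
      show (-s).re = -(r:ℝ) by simp [hs],
      Real.rpow_neg (by positivity), Real.rpow_natCast]
  have habsC : ‖Complex.Gamma s‖ = Real.Gamma r := by
    rw [hs, show ((r:ℕ):ℂ) = (((r:ℝ)):ℂ) by push_cast; rfl, Complex.Gamma_ofReal,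
      Complex.norm_real, Real.norm_eq_abs, abs_of_pos hGpos]
  have habsD : ‖Complex.exp (-π * Complex.I * s / 2)‖ = 1 := by
    rw [show (-(π:ℂ) * Complex.I * s / 2) = ((-(π*r/2) : ℝ):ℂ) * Complex.I by
        rw [hs]; push_cast; ring,
      Complex.norm_exp_ofReal_mul_I]
  have hqq : (q:ℝ) ^ ((r:ℝ) - 1) * Real.sqrt q = (q:ℝ) ^ ((r:ℝ) - 1/2) := by
    rw [Real.sqrt_eq_rpow, ← Real.rpow_add hq0]
    congr 1
    ring
  have hXeq : ‖χ.LFunction (1 - s)‖ =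
      (q:ℝ) ^ ((r:ℝ) - 1/2) * (2 * Real.Gamma r) / (2*π)^r * ‖χ.LFunction s‖ := by
    rw [hLHS]
    simp only [norm_mul]
    rw [habsA, habsB, habsC, habsD, habsg, Complex.norm_two, ← hqq]
    ring
  -- the lower bound for |L(χ, r)|
  have hz1 : (riemannZeta s).re = ∑' n : ℕ, 1 / (n : ℝ) ^ r := by
    rw [hs]; exact zeta_re_eq hr
  have hz2 : (riemannZeta (2 * s)).re = ∑' n : ℕ, 1 / (n : ℝ) ^ (2 * r) := by
    rw [hs, show (2:ℂ) * ((r:ℕ):ℂ) = ((2*r:ℕ):ℂ) by push_cast; ring]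
    exact zeta_re_eq (by omega)
  have hZ1pos : 0 < (riemannZeta s).re := by rw [hs]; exact zeta_re_pos hr
  have hfin : (riemannZeta (2 * s)).re ≤
      (riemannZeta s).re * ‖χ.LFunction s‖ := by
    rw [hz1, hz2, show χ.LFunction s = LSeries ↗χ s from
      DirichletCharacter.LFunction_eq_LSeries χ hre]
    exact LSeries_abs_lower_bound hr χ hquad
  rw [ge_iff_le, hXeq]
  calc (q:ℝ) ^ ((r:ℝ) - 1/2) * (2 * Real.Gamma r * (riemannZeta (2 * s)).re) /
        ((2 * π) ^ r * (riemannZeta s).re)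
      = ((q:ℝ) ^ ((r:ℝ) - 1/2) * (2 * Real.Gamma r) / (2*π)^r) *
        ((riemannZeta (2 * s)).re / (riemannZeta s).re) := by ring
    _ ≤ ((q:ℝ) ^ ((r:ℝ) - 1/2) * (2 * Real.Gamma r) / (2*π)^r) *
        ‖χ.LFunction s‖ := by
        refine mul_le_mul_of_nonneg_left ?_ ?_
        · rw [div_le_iff₀ hZ1pos]
          linarith [hfin]
        · have h1 : (0:ℝ) ≤ (q:ℝ) ^ ((r:ℝ) - 1/2) := Real.rpow_nonneg hq0.le _
          positivity
end

section
/- For every real number K > 0 and every integer r ≥ 2, there are only finitely many natural numbers q for which there exists a primitive quadratic Dirichlet character χ of conductor q satisfying χ(−1) = (−1)^r and |L(1−r, χ)| ≤ K · 2^{ω(q)}. -/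
open Complex DirichletCharacter ZMod Real

-- Gauss sum squared for a primitive quadratic character
lemma aux_gauss_sq {N : ℕ} [NeZero N] {χ : DirichletCharacter ℂ N}
    (hp : χ.IsPrimitive) (hq : MulChar.IsQuadratic χ) :
    (gaussSum χ ZMod.stdAddChar) ^ 2 = χ (-1) * N := by
  set τ := gaussSum χ ZMod.stdAddChar with hτ
  have h1 : ZMod.dft (χ ·) = fun k ↦ χ (-k) * τ := by
    funext k
    rw [hp.fourierTransform_eq_inv_mul_gaussSum, hq.inv]
  have h2 := ZMod.dft_dft ((χ ·) : ZMod N → ℂ)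
  rw [h1] at h2
  have h3 : ZMod.dft (fun k : ZMod N ↦ χ (-k) * τ) 1 = χ 1 * τ * τ := by
    rw [show (fun k : ZMod N ↦ χ (-k) * τ) = fun k ↦ (fun j : ZMod N ↦ χ (-j)) k * τ from rfl,
      ZMod.dft_mul_const, ZMod.dft_comp_neg (fun j : ZMod N ↦ χ j)]
    simp only [neg_neg]
    rw [show ZMod.dft (fun j : ZMod N ↦ χ j) (-1) = χ (-(-1)) * τ from congrFun h1 (-1)]
    simp
  have h4 := congrFun h2 1
  rw [h3] at h4
  rw [sq]
  simpa [mul_comm] using h4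

lemma aux_quad_neg_one_sq {N : ℕ} {χ : DirichletCharacter ℂ N} (hq : MulChar.IsQuadratic χ) :
    χ (-1) * χ (-1) = 1 := by
  calc χ (-1) * χ (-1) = (χ ^ 2) (-1) := by rw [pow_two]; rfl
  _ = 1 := by rw [hq.sq_eq_one]; simp [MulChar.one_apply (isUnit_one.neg)]

lemma aux_gauss_abs {N : ℕ} [NeZero N] {χ : DirichletCharacter ℂ N}
    (hp : χ.IsPrimitive) (hq : MulChar.IsQuadratic χ) :
    ‖gaussSum χ ZMod.stdAddChar‖ = Real.sqrt N := by
  have hχabs : ‖χ (-1)‖ = 1 := by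
    have := congrArg (‖·‖) (aux_quad_neg_one_sq hq)
    rw [norm_mul, norm_one] at this
    nlinarith [norm_nonneg (χ (-1))]
  have h : ‖gaussSum χ ZMod.stdAddChar‖ ^ 2 = N := by
    rw [← norm_pow, aux_gauss_sq hp hq, norm_mul, hχabs, one_mul, Complex.norm_natCast]
  rw [← h, Real.sqrt_sq (norm_nonneg _)]

lemma aux_chi_abs_le {N : ℕ} {χ : DirichletCharacter ℂ N} (hq : MulChar.IsQuadratic χ)
    (a : ZMod N) : ‖χ a‖ ≤ 1 := by
  rcases hq a with h | h | h <;> simp [h]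

lemma aux_L_lower {N : ℕ} [NeZero N] {χ : DirichletCharacter ℂ N}
    (hq : MulChar.IsQuadratic χ) {r : ℕ} (hr : 2 ≤ r) :
    2 - Real.pi ^ 2 / 6 ≤ ‖χ.LFunction r‖ := by
  have hre : 1 < ((r : ℂ)).re := by
    simp only [Complex.natCast_re]
    exact_mod_cast (by omega : 1 < r)
  rw [DirichletCharacter.LFunction_eq_LSeries χ hre]
  set f : ℕ → ℂ := fun n ↦ LSeries.term (χ ·) r n with hf
  have hsum : Summable f := LSeriesSummable_of_bounded_of_one_lt_re
    (m := 1) (fun n _ ↦ aux_chi_abs_le hq n) hre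
  have hsum1 : Summable fun n ↦ f (n + 1) := (summable_nat_add_iff 1).2 hsum
  have hsum2 : Summable fun n ↦ f (n + 2) := (summable_nat_add_iff 2).2 hsum
  -- majorant
  have hb : HasSum (fun n : ℕ ↦ 1 / ((n : ℝ) + 2) ^ 2) (Real.pi ^ 2 / 6 - 1) := by
    have key : HasSum (fun n : ℕ ↦ 1 / ((n + 2 : ℕ) : ℝ) ^ 2) (Real.pi ^ 2 / 6 - 1) := by
      rw [hasSum_nat_add_iff (f := fun n : ℕ ↦ 1 / (n : ℝ) ^ 2) 2]
      convert hasSum_zeta_two using 1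
      case e'_3 => rfl
      rw [Finset.sum_range_succ, Finset.sum_range_one]
      norm_num
    simpa using key
  have hmaj : ∀ n : ℕ, ‖f (n + 2)‖ ≤ 1 / ((n : ℝ) + 2) ^ 2 := by
    intro n
    rw [LSeries.norm_term_eq, if_neg (by omega)]
    have h1 : (1 : ℝ) ≤ ((n + 2 : ℕ) : ℝ) := by exact_mod_cast Nat.le_add_left 1 (n + 1)
    have h2 : ((n + 2 : ℕ) : ℝ) ^ (2 : ℝ) ≤ ((n + 2 : ℕ) : ℝ) ^ (((r : ℂ)).re) := by
      apply Real.rpow_le_rpow_of_exponent_le h1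
      simp only [Complex.natCast_re]
      exact_mod_cast hr
    have h3 : (0 : ℝ) < ((n + 2 : ℕ) : ℝ) ^ (((r : ℂ)).re) :=
      Real.rpow_pos_of_pos (by positivity) _
    have h4 : ((n : ℝ) + 2) ^ 2 ≤ ((n + 2 : ℕ) : ℝ) ^ (((r : ℂ)).re) := by
      calc ((n : ℝ) + 2) ^ 2 = ((n + 2 : ℕ) : ℝ) ^ (2 : ℝ) := by
            rw [Real.rpow_two]; push_cast; ring
      _ ≤ _ := h2
    have h5 : ‖χ ((n + 2 : ℕ) : ZMod N)‖ ≤ 1 := by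
      exact aux_chi_abs_le hq _
    exact div_le_div₀ zero_le_one h5 (by positivity) h4
  have hnorm_sum : Summable fun n ↦ ‖f (n + 2)‖ :=
    Summable.of_nonneg_of_le (fun _ ↦ norm_nonneg _) hmaj hb.summable
  have hS : ‖∑' n : ℕ, f (n + 2)‖ ≤ Real.pi ^ 2 / 6 - 1 := by
    calc ‖∑' n : ℕ, f (n + 2)‖ ≤ ∑' n : ℕ, ‖f (n + 2)‖ := norm_tsum_le_tsum_norm hnorm_sum
    _ ≤ ∑' n : ℕ, 1 / ((n : ℝ) + 2) ^ 2 := Summable.tsum_le_tsum hmaj hnorm_sum hb.summable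
    _ = Real.pi ^ 2 / 6 - 1 := hb.tsum_eq
  have e1 : LSeries (χ ·) r = 1 + ∑' n : ℕ, f (n + 2) := by
    rw [LSeries, Summable.tsum_eq_zero_add hsum, Summable.tsum_eq_zero_add hsum1]
    have hf0 : f 0 = 0 := LSeries.term_zero _ _
    have hf1 : f (0 + 1) = 1 := by
      simp [hf, LSeries.term_of_ne_zero one_ne_zero]
    rw [hf0, hf1, zero_add]
  rw [e1]
  have := norm_add_le (1 + ∑' n : ℕ, f (n + 2)) (-∑' n : ℕ, f (n + 2))
  simp only [add_neg_cancel_right, norm_one, norm_neg] at this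
  linarith

lemma aux_two_pow_omega_le {q : ℕ} (hq : q ≠ 0) : 2 ^ q.primeFactors.card ≤ q :=
  calc 2 ^ q.primeFactors.card ≤ ∏ p ∈ q.primeFactors, p :=
      Finset.pow_card_le_prod _ _ _ (fun p hp ↦ (Nat.prime_of_mem_primeFactors hp).two_le)
  _ ≤ q := Nat.le_of_dvd (Nat.pos_of_ne_zero hq) (Nat.prod_primeFactors_dvd q)

/-- For every real `K > 0` and every integer `r ≥ 2`, there are only finitely many natural
numbers `q` carrying a primitive quadratic Dirichlet character `χ` of conductor `q` with
`χ(-1) = (-1)^r` and `|L(1-r, χ)| ≤ K · 2^(ω(q))`. -/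
theorem finitely_many_eligible_conductors (K : ℝ) (hK : 0 < K) (r : ℕ) (hr : 2 ≤ r) :
    {q : ℕ | ∃ (_ : NeZero q) (χ : DirichletCharacter ℂ q),
      χ.IsPrimitive ∧ χ.IsQuadratic ∧ χ (-1) = (-1 : ℂ) ^ r ∧
      ‖χ.LFunction (1 - r)‖ ≤ K * 2 ^ q.primeFactors.card}.Finite := by
  set δ : ℝ := 2 - Real.pi ^ 2 / 6 with hδdef
  have hδ : 0 < δ := by
    have h1 := Real.pi_lt_d2
    have h2 := Real.pi_gt_three
    rw [hδdef]; nlinarith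
  set z1 : ℂ := if Even r then (r : ℂ) else (r : ℂ) + 1 with hz1
  set z2 : ℂ := if Even r then 1 - (r : ℂ) else 2 - (r : ℂ) with hz2
  set G1 : ℝ := ‖Complex.Gammaℝ z1‖ with hG1def
  set G2 : ℝ := ‖Complex.Gammaℝ z2‖ with hG2def
  have hrR : (2 : ℝ) ≤ (r : ℝ) := by exact_mod_cast hr
  have hG1 : 0 < G1 := by
    rw [hG1def]
    have : Complex.Gammaℝ z1 ≠ 0 := by
      apply Complex.Gammaℝ_ne_zero_of_re_pos
      rw [hz1]; split_ifs <;> simp [Complex.natCast_re] <;> positivity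
    simpa [AbsoluteValue.pos_iff] using this
  have hG2 : 0 < G2 := by
    rw [hG2def]
    have : Complex.Gammaℝ z2 ≠ 0 := by
      rw [Ne, Complex.Gammaℝ_eq_zero_iff]
      rintro ⟨n, hn⟩
      rw [hz2] at hn
      rcases Nat.even_or_odd r with hre | hro
      · rw [if_pos hre] at hn
        have hrc : (r : ℂ) = 2 * n + 1 := by linear_combination -hn
        have hr' : r = 2 * n + 1 := by exact_mod_cast hrc
        rcases hre with ⟨k, hk⟩
        omega
      · rw [if_neg (Nat.not_even_iff_odd.mpr hro)] at hn
        have hrc : (r : ℂ) = 2 * n + 2 := by linear_combination -hn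
        have hr' : r = 2 * n + 2 := by exact_mod_cast hrc
        rcases hro with ⟨k, hk⟩
        omega
    simpa [AbsoluteValue.pos_iff] using this
  set M : ℝ := K * G2 / (G1 * δ) with hM
  have hM0 : 0 < M := by positivity
  apply Set.Finite.subset (Set.finite_Iic (⌈M ^ 2⌉₊ + 1))
  rintro q ⟨hne, χ, hprim, hquad, hpar, hL⟩
  simp only [Set.mem_Iic]
  -- basic facts
  have hq0 : q ≠ 0 := hne.out
  have hq1R : (1 : ℝ) ≤ (q : ℝ) := by exact_mod_cast Nat.one_le_iff_ne_zero.mpr hq0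
  have hr0 : (r : ℂ) ≠ 0 := Nat.cast_ne_zero.mpr (by omega)
  have h10 : (1 : ℂ) - (r : ℂ) ≠ 0 := by
    rw [sub_ne_zero]
    intro h
    have : (1 : ℕ) = r := by exact_mod_cast h
    omega
  -- parity and gamma factors
  have hγ1 : DirichletCharacter.gammaFactor χ (r : ℂ) = Complex.Gammaℝ z1 := by
    rcases Nat.even_or_odd r with hre | hro
    · have hχ : χ.Even := by
        rw [DirichletCharacter.Even, hpar, hre.neg_one_pow]
      rw [hχ.gammaFactor_def, hz1, if_pos hre]
    · have hχ : χ.Odd := by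
        rw [DirichletCharacter.Odd, hpar, hro.neg_one_pow]
      rw [hχ.gammaFactor_def, hz1, if_neg (Nat.not_even_iff_odd.mpr hro)]
  have hγ2 : DirichletCharacter.gammaFactor χ (1 - (r : ℂ)) = Complex.Gammaℝ z2 := by
    rcases Nat.even_or_odd r with hre | hro
    · have hχ : χ.Even := by
        rw [DirichletCharacter.Even, hpar, hre.neg_one_pow]
      rw [hχ.gammaFactor_def, hz2, if_pos hre]
    · have hχ : χ.Odd := by
        rw [DirichletCharacter.Odd, hpar, hro.neg_one_pow]
      rw [hχ.gammaFactor_def, hz2, if_neg (Nat.not_even_iff_odd.mpr hro)]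
      ring_nf
  -- root number has absolute value 1
  have hsq : Real.sqrt q ≠ 0 := by positivity
  have hrn : ‖DirichletCharacter.rootNumber χ‖ = 1 := by
    rw [DirichletCharacter.rootNumber, norm_div, norm_div, aux_gauss_abs hprim hquad,
      norm_pow, Complex.norm_I, one_pow, div_one]
    rw [show ((q : ℂ)) = ((q : ℝ) : ℂ) by push_cast; rfl,
      Complex.norm_cpow_eq_rpow_re_of_pos (by positivity)]
    rw [show ((1 / 2 : ℂ)).re = 1 / 2 by norm_num [Complex.div_re]]
    rw [← Real.sqrt_eq_rpow]
    exact div_self hsq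
  -- the functional equation chain
  have hΛr : DirichletCharacter.completedLFunction χ (r : ℂ) =
      Complex.Gammaℝ z1 * χ.LFunction (r : ℂ) := by
    have h := DirichletCharacter.LFunction_eq_completed_div_gammaFactor χ (r : ℂ) (Or.inl hr0)
    have hγ1ne : Complex.Gammaℝ z1 ≠ 0 := by
      intro h0
      rw [hG1def, h0] at hG1
      simp at hG1
    rw [hγ1] at h
    rw [h, mul_div_cancel₀ _ hγ1ne]
  have hFE := hprim.completedLFunction_one_sub (r : ℂ)
  rw [hquad.inv] at hFE
  have hLval : χ.LFunction (1 - (r : ℂ)) =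
      (q : ℂ) ^ ((r : ℂ) - 1 / 2) * DirichletCharacter.rootNumber χ *
        (Complex.Gammaℝ z1 * χ.LFunction (r : ℂ)) / Complex.Gammaℝ z2 := by
    rw [DirichletCharacter.LFunction_eq_completed_div_gammaFactor χ _ (Or.inl h10), hγ2,
      hFE, hΛr]
  -- absolute values
  have habs : ‖χ.LFunction (1 - (r : ℂ))‖ =
      (q : ℝ) ^ ((r : ℝ) - 1 / 2) * (G1 * ‖χ.LFunction (r : ℂ)‖) / G2 := by
    rw [hLval, norm_div, norm_mul, norm_mul, norm_mul, hrn, mul_one]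
    rw [show ((q : ℂ)) = ((q : ℝ) : ℂ) by push_cast; rfl,
      Complex.norm_cpow_eq_rpow_re_of_pos (by positivity)]
    congr 2
    simp [Complex.sub_re, Complex.natCast_re, Complex.div_re]
  -- lower bound on L(r)
  have hLlow : δ ≤ ‖χ.LFunction (r : ℂ)‖ := aux_L_lower hquad hr
  -- upper bound from hypothesis
  have hup : ‖χ.LFunction (1 - (r : ℂ))‖ ≤ K * q := by
    refine hL.trans ?_
    have h2 : ((2 : ℝ)) ^ q.primeFactors.card ≤ (q : ℝ) := by
      exact_mod_cast aux_two_pow_omega_le hq0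
    exact mul_le_mul_of_nonneg_left h2 hK.le
  -- rpow lower bound
  have hq32 : (q : ℝ) * Real.sqrt q ≤ (q : ℝ) ^ ((r : ℝ) - 1 / 2) := by
    have h1 : (q : ℝ) ^ ((3 : ℝ) / 2) ≤ (q : ℝ) ^ ((r : ℝ) - 1 / 2) :=
      Real.rpow_le_rpow_of_exponent_le hq1R (by linarith)
    have h2 : (q : ℝ) ^ ((3 : ℝ) / 2) = q * Real.sqrt q := by
      rw [show (3 : ℝ) / 2 = 1 + 1 / 2 by norm_num, Real.rpow_add (by positivity),
        Real.rpow_one, Real.sqrt_eq_rpow]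
    linarith
  -- combine
  have hkey : (q : ℝ) * Real.sqrt q * (G1 * δ) / G2 ≤ K * q := by
    calc (q : ℝ) * Real.sqrt q * (G1 * δ) / G2
        ≤ (q : ℝ) ^ ((r : ℝ) - 1 / 2) * (G1 * ‖χ.LFunction (r : ℂ)‖) / G2 := by
          have hnum : (q : ℝ) * Real.sqrt q * (G1 * δ) ≤
              (q : ℝ) ^ ((r : ℝ) - 1 / 2) * (G1 * ‖χ.LFunction (r : ℂ)‖) :=
            mul_le_mul hq32 (mul_le_mul_of_nonneg_left hLlow hG1.le)
              (mul_nonneg hG1.le hδ.le) (Real.rpow_nonneg (by positivity) _)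
          exact div_le_div_of_nonneg_right hnum hG2.le
      _ = ‖χ.LFunction (1 - (r : ℂ))‖ := habs.symm
      _ ≤ K * q := hup
  have hsqrt : Real.sqrt q ≤ M := by
    have hq0R : (0 : ℝ) < q := by linarith
    rw [div_le_iff₀ hG2] at hkey
    have h2 : Real.sqrt q * (G1 * δ) ≤ K * G2 := by
      have h3 : (q : ℝ) * (Real.sqrt q * (G1 * δ)) ≤ (q : ℝ) * (K * G2) := by
        calc (q : ℝ) * (Real.sqrt q * (G1 * δ)) = (q : ℝ) * Real.sqrt q * (G1 * δ) := by ring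
        _ ≤ K * q * G2 := hkey
        _ = (q : ℝ) * (K * G2) := by ring
      exact le_of_mul_le_mul_left h3 hq0R
    rw [hM, le_div_iff₀ (by positivity : (0:ℝ) < G1 * δ)]
    exact h2
  have hqM : (q : ℝ) ≤ M ^ 2 := by
    calc (q : ℝ) = Real.sqrt q ^ 2 := (Real.sq_sqrt (by positivity)).symm
    _ ≤ M ^ 2 := pow_le_pow_left₀ (Real.sqrt_nonneg _) hsqrt 2
  have : q ≤ ⌈M ^ 2⌉₊ := by
    have := (Nat.le_ceil (M ^ 2))
    exact_mod_cast hqM.trans this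
  omega
end
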